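/- arXiv:1709.07031 — 6 statements merged into one kernel-verified Lean document; each statement's English description precedes it below -/
import Mathlib

section
/- Let (γ̂_{n,·})_{n∈ℕ} be random elements of C[0,1] on a probability space, let t ↦ γ_t be a continuous function on [0,1], let Γ be a random element of C[0,1], and let (λ_n) be a positive bounded sequence. Assume (i) sup_{t∈[0,1]} |λ_n^{−1}(γ̂_{n,t} − γ_t) − Γ_t| →(P) 0 as n → ∞, and (ii) sup_{|s−t|≤δ_n} |γ_s − γ_t| = o(λ_n). Then the linearly interpolated estimator γ̂*_{n,t} := ⟨γ̂_{n,·}⟩_{n,t} satisfies sup_{t∈[0,1]} |λ_n^{−1}(γ̂*_{n,t} − γ_t) − Γ_t| →(P) 0. -/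
/-!
At each `s` the interpolant is a convex combination of `γ̂ₙ` at two points `u, v` within `δₙ`
of `s`, so its standardized error at `s` is bounded by the standardized error of `γ̂ₙ` at `u, v`,
plus `|γ u - γ s| / λₙ`, plus the oscillation of `Γ` over distances `δₙ`. The first term is
controlled by (i), the second by (ii), and the third tends to zero in probability because the
paths of `Γ` are uniformly continuous.

The oscillation event of `Γ` is not measurable a priori. But each `Γ_s` is a.e.-measurable as the
limit in probability of measurable variables, and the event can be computed on rational pairs, so
it is null-measurable and continuity from above applies.
-/

open MeasureTheory Filter Topology Set
open scoped Classical

/-- Piecewise linear interpolation of `z` on the grid `t 1 < t 2 < … < t jn`. -/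
noncomputable def linInterp (jn : ℕ) (t : ℕ → ℝ) (z : ℝ → ℝ) (x : ℝ) : ℝ :=
  if x ≤ t 1 then z (t 1)
  else if h : ∃ j, 2 ≤ j ∧ j ≤ jn ∧ t (j - 1) < x ∧ x ≤ t j then
    ((t (Nat.find h) - x) * z (t (Nat.find h - 1))
        + (x - t (Nat.find h - 1)) * z (t (Nat.find h)))
      / (t (Nat.find h) - t (Nat.find h - 1))
  else z (t jn)

structure IsMeshGrid (jn : ℕ) (t : ℕ → ℝ) (D : ℝ) : Prop where
  one_le : 1 ≤ jn
  zero : t 0 = 0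
  last : t (jn + 1) = 1
  nonneg : 0 ≤ t 1
  le_one : t jn ≤ 1
  lt_succ : ∀ j, 1 ≤ j → j < jn → t j < t (j + 1)
  gap_le : ∀ j ∈ Finset.Icc 1 (jn + 1), t j - t (j - 1) ≤ D

namespace IsMeshGrid

variable {jn : ℕ} {t : ℕ → ℝ} {D : ℝ}

lemma mono (hg : IsMeshGrid jn t D) {i j : ℕ} (hi : 1 ≤ i) (hij : i ≤ j) (hj : j ≤ jn) :
    t i ≤ t j := by
  induction j, hij using Nat.le_induction with
  | base => exact le_rfl
  | succ k hik ih => exact (ih (by omega)).trans (hg.lt_succ k (by omega) (by omega)).le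

lemma mem_Icc (hg : IsMeshGrid jn t D) {j : ℕ} (hj1 : 1 ≤ j) (hj : j ≤ jn) : t j ∈ Icc (0:ℝ) 1 :=
  ⟨hg.nonneg.trans (hg.mono le_rfl hj1 hj), (hg.mono hj1 hj le_rfl).trans hg.le_one⟩

lemma exists_cell (hg : IsMeshGrid jn t D) {x : ℝ} (h1 : t 1 < x) (hjn : x ≤ t jn) :
    ∃ j, 2 ≤ j ∧ j ≤ jn ∧ t (j - 1) < x ∧ x ≤ t j := by
  have hex : ∃ m, 1 ≤ m ∧ x ≤ t m := ⟨jn, hg.one_le, hjn⟩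
  obtain ⟨hm1, hmx⟩ := Nat.find_spec hex
  have hm2 : 2 ≤ Nat.find hex := by
    by_contra! h
    have : Nat.find hex = 1 := by omega
    exact absurd (this ▸ hmx) (not_le.2 h1)
  refine ⟨Nat.find hex, hm2, Nat.find_min' hex ⟨hg.one_le, hjn⟩, ?_, hmx⟩
  have hprev := Nat.find_min hex (show Nat.find hex - 1 < Nat.find hex by omega)
  exact not_le.1 fun h => hprev ⟨by omega, h⟩

lemma linInterp_eq_convexComb (hg : IsMeshGrid jn t D) {x : ℝ} (hx : x ∈ Icc (0:ℝ) 1) :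
    ∃ u ∈ Icc (0:ℝ) 1, ∃ v ∈ Icc (0:ℝ) 1, |u - x| ≤ D ∧ |v - x| ≤ D ∧
      ∃ α β : ℝ, 0 ≤ α ∧ 0 ≤ β ∧ α + β = 1 ∧
        ∀ z : ℝ → ℝ, linInterp jn t z x = α * z u + β * z v := by
  have node : ∀ j, 1 ≤ j → j ≤ jn → |t j - x| ≤ D →
      (∀ z : ℝ → ℝ, linInterp jn t z x = z (t j)) →
      ∃ u ∈ Icc (0:ℝ) 1, ∃ v ∈ Icc (0:ℝ) 1, |u - x| ≤ D ∧ |v - x| ≤ D ∧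
        ∃ α β : ℝ, 0 ≤ α ∧ 0 ≤ β ∧ α + β = 1 ∧
          ∀ z : ℝ → ℝ, linInterp jn t z x = α * z u + β * z v :=
    fun j hj1 hj hd hz => ⟨t j, hg.mem_Icc hj1 hj, t j, hg.mem_Icc hj1 hj, hd, hd, 1, 0,
      zero_le_one, le_rfl, add_zero 1, fun z => by simp [hz]⟩
  by_cases hA : x ≤ t 1
  · refine node 1 le_rfl hg.one_le ?_ fun z => by simp [linInterp, hA]
    have := hg.gap_le 1 (by simp)
    rw [abs_of_nonneg (by linarith)]
    simp only [Nat.sub_self, hg.zero] at this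
    linarith [hx.1]
  by_cases hB : ∃ j, 2 ≤ j ∧ j ≤ jn ∧ t (j - 1) < x ∧ x ≤ t j
  · set j := Nat.find hB with hj
    obtain ⟨hj2, hjn, hjx, hxj⟩ := Nat.find_spec hB
    have hgap := hg.gap_le j (Finset.mem_Icc.2 ⟨by omega, by omega⟩)
    have hpos : 0 < t j - t (j - 1) := by linarith
    refine ⟨t (j - 1), hg.mem_Icc (by omega) (by omega), t j, hg.mem_Icc (by omega) hjn,
      ?_, ?_, (t j - x) / (t j - t (j - 1)), (x - t (j - 1)) / (t j - t (j - 1)),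
      by bound, by bound, by field_simp; ring, fun z => ?_⟩
    · rw [abs_of_neg (by linarith)]; linarith
    · rw [abs_of_nonneg (by linarith)]; linarith
    · simp only [linInterp, if_neg hA, dif_pos hB, ← hj]
      field_simp
  · have hlt : t jn < x := by
      by_contra! hle
      exact hB (hg.exists_cell (not_le.1 hA) hle)
    refine node jn hg.one_le le_rfl ?_ fun z => by simp [linInterp, hA, hB]
    have := hg.gap_le (jn + 1) (by simp)
    rw [abs_of_neg (by linarith)]
    simp only [Nat.add_sub_cancel, hg.last] at this
    linarith [hx.2]

lemma abs_linInterp_sub_le (hg : IsMeshGrid jn t D) {z γ Γ : ℝ → ℝ} {lam a b c : ℝ}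
    (hlam : 0 < lam) (hz : ∀ s ∈ Icc (0:ℝ) 1, |(z s - γ s) / lam - Γ s| ≤ a)
    (hγ : ∀ s ∈ Icc (0:ℝ) 1, ∀ u ∈ Icc (0:ℝ) 1, |s - u| ≤ D → |γ s - γ u| ≤ b * lam)
    (hΓ : ∀ s ∈ Icc (0:ℝ) 1, ∀ u ∈ Icc (0:ℝ) 1, |s - u| ≤ D → |Γ s - Γ u| ≤ c)
    {x : ℝ} (hx : x ∈ Icc (0:ℝ) 1) :
    |(linInterp jn t z x - γ x) / lam - Γ x| ≤ a + b + c := by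
  have near : ∀ w ∈ Icc (0:ℝ) 1, |w - x| ≤ D →
      (z w - γ x) / lam - Γ x ∈ Metric.closedBall 0 (a + b + c) := by
    intro w hw hwx
    have hγ' : |(γ w - γ x) / lam| ≤ b := by
      rw [abs_div, abs_of_pos hlam, div_le_iff₀ hlam]
      exact hγ w hw x hx hwx
    rw [mem_closedBall_zero_iff, Real.norm_eq_abs]
    calc |(z w - γ x) / lam - Γ x|
        = |((z w - γ w) / lam - Γ w) + (γ w - γ x) / lam + (Γ w - Γ x)| := by
          congr 1; field_simp; ring
      _ ≤ |(z w - γ w) / lam - Γ w| + |(γ w - γ x) / lam| + |Γ w - Γ x| := abs_add_three _ _ _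
      _ ≤ a + b + c := by gcongr <;> grind
  obtain ⟨u, hu, v, hv, hux, hvx, α, β, hα, hβ, hαβ, hlin⟩ := hg.linInterp_eq_convexComb hx
  have hcomb : (linInterp jn t z x - γ x) / lam - Γ x
      = α • ((z u - γ x) / lam - Γ x) + β • ((z v - γ x) / lam - Γ x) := by
    rw [hlin, smul_eq_mul, smul_eq_mul]
    field_simp
    linear_combination (γ x + lam * Γ x) * hαβ
  have := (convex_closedBall (0:ℝ) (a + b + c)) (near u hu hux) (near v hv hvx) hα hβ hαβ
  rwa [← hcomb, mem_closedBall_zero_iff, Real.norm_eq_abs] at this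

end IsMeshGrid

section Oscillation

variable {Ω : Type*}

/-- Strict `|s - u| < d` makes the event open in `(s, u)`, so it can be computed on rational
pairs. -/
def oscillationEvent (Γ : Ω → ℝ → ℝ) (c d : ℝ) : Set Ω :=
  {ω | ∃ s ∈ Icc (0:ℝ) 1, ∃ u ∈ Icc (0:ℝ) 1, |s - u| < d ∧ c < |Γ ω s - Γ ω u|}

variable {Γ : Ω → ℝ → ℝ} {c : ℝ}

lemma oscillationEvent_mono {d d' : ℝ} (h : d ≤ d') :
    oscillationEvent Γ c d ⊆ oscillationEvent Γ c d' :=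
  fun _ ⟨s, hs, u, hu, hsu, hc⟩ => ⟨s, hs, u, hu, hsu.trans_le h, hc⟩

lemma oscillationEvent_eq_iUnion_rat (hΓ : ∀ ω, ContinuousOn (Γ ω) (Icc 0 1)) (d : ℝ) :
    oscillationEvent Γ c d = ⋃ (q : ℚ) (r : ℚ) (_ : |(q:ℝ) - r| < d),
      {ω | c < |Γ ω (projIcc (0:ℝ) 1 zero_le_one q) - Γ ω (projIcc (0:ℝ) 1 zero_le_one r)|} := by
  ext ω
  simp only [mem_iUnion, exists_prop]
  constructor
  · rintro ⟨s, hs, u, hu, hsu, hc⟩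
    set g : ℝ → ℝ := fun x => Γ ω (projIcc 0 1 zero_le_one x)
    have hg : Continuous g := (hΓ ω).comp_continuous
      (continuous_subtype_val.comp continuous_projIcc) fun x => (projIcc 0 1 zero_le_one x).2
    have hopen : IsOpen ({p : ℝ × ℝ | |p.1 - p.2| < d} ∩ {p | c < |g p.1 - g p.2|}) :=
      (isOpen_lt (continuous_fst.sub continuous_snd).abs continuous_const).inter
        (isOpen_lt continuous_const ((hg.comp continuous_fst).sub (hg.comp continuous_snd)).abs)
    obtain ⟨⟨q, r⟩, hqr⟩ := (Rat.denseRange_cast.prodMap Rat.denseRange_cast).exists_mem_open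
      hopen ⟨(s, u), hsu, by simpa [g, projIcc_of_mem _ hs, projIcc_of_mem _ hu] using hc⟩
    exact ⟨q, r, hqr.1, hqr.2⟩
  · rintro ⟨q, r, hqr, hc⟩
    exact ⟨_, Subtype.coe_prop _, _, Subtype.coe_prop _,
      (abs_projIcc_sub_projIcc zero_le_one).trans_lt hqr, hc⟩

lemma biInter_oscillationEvent_eq_empty (hc : 0 < c) (hΓ : ∀ ω, ContinuousOn (Γ ω) (Icc 0 1)) :
    ⋂ d > 0, oscillationEvent Γ c d = ∅ := by
  refine eq_empty_of_forall_notMem fun ω hω => ?_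
  obtain ⟨θ, hθ, hunif⟩ := Metric.uniformContinuousOn_iff.1
    (isCompact_Icc.uniformContinuousOn_of_continuous (hΓ ω)) c hc
  obtain ⟨s, hs, u, hu, hsu, hlt⟩ := mem_iInter₂.1 hω θ hθ
  exact (hunif s hs u hu hsu).not_gt hlt

variable [MeasurableSpace Ω] {P : Measure Ω}

lemma nullMeasurableSet_oscillationEvent (hΓ : ∀ ω, ContinuousOn (Γ ω) (Icc 0 1))
    (hΓm : ∀ s ∈ Icc (0:ℝ) 1, AEMeasurable (fun ω => Γ ω s) P) (d : ℝ) :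
    NullMeasurableSet (oscillationEvent Γ c d) P := by
  rw [oscillationEvent_eq_iUnion_rat hΓ]
  refine .iUnion fun q => .iUnion fun r => .iUnion fun _ =>
    nullMeasurableSet_lt aemeasurable_const ?_
  exact ((hΓm _ (Subtype.coe_prop _)).sub (hΓm _ (Subtype.coe_prop _))).abs

lemma tendsto_measure_oscillationEvent [IsFiniteMeasure P] (hc : 0 < c)
    (hΓ : ∀ ω, ContinuousOn (Γ ω) (Icc 0 1))
    (hΓm : ∀ s ∈ Icc (0:ℝ) 1, AEMeasurable (fun ω => Γ ω s) P) :
    Tendsto (fun d => P (oscillationEvent Γ c d)) (𝓝[>] 0) (𝓝 0) := by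
  have h := tendsto_measure_biInter_gt (μ := P) (s := oscillationEvent Γ c) (a := 0)
    (fun d _ => nullMeasurableSet_oscillationEvent hΓ hΓm d)
    (fun _ _ _ h => oscillationEvent_mono h) ⟨1, one_pos, measure_ne_top P _⟩
  rwa [biInter_oscillationEvent_eq_empty hc hΓ, measure_empty] at h

lemma tendsto_measure_oscillation_le [IsFiniteMeasure P] (hc : 0 < c)
    (hΓ : ∀ ω, ContinuousOn (Γ ω) (Icc 0 1))
    (hΓm : ∀ s ∈ Icc (0:ℝ) 1, AEMeasurable (fun ω => Γ ω s) P)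
    {d : ℕ → ℝ} (hd : Tendsto d atTop (𝓝 0)) :
    Tendsto (fun n => P {ω | ∃ s ∈ Icc (0:ℝ) 1, ∃ u ∈ Icc (0:ℝ) 1,
      |s - u| ≤ d n ∧ c < |Γ ω s - Γ ω u|}) atTop (𝓝 0) := by
  set d' : ℕ → ℝ := fun n => |d n| + 1 / (n + 1)
  have hd' : Tendsto d' atTop (𝓝[>] 0) := by
    refine tendsto_nhdsWithin_iff.2 ⟨?_, .of_forall fun n => show 0 < d' n by positivity⟩
    simpa [d'] using hd.abs.add tendsto_one_div_add_atTop_nhds_zero_nat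
  refine tendsto_of_tendsto_of_tendsto_of_le_of_le tendsto_const_nhds
    ((tendsto_measure_oscillationEvent hc hΓ hΓm).comp hd') (fun _ => zero_le)
    fun n => measure_mono fun ω ⟨s, hs, u, hu, hsu, hlt⟩ => ⟨s, hs, u, hu, ?_, hlt⟩
  have : 0 < 1 / ((n:ℝ) + 1) := by positivity
  linarith [le_abs_self (d n)]

lemma aemeasurable_of_tendsto_sup_in_measure {S : Set ℝ} {X : ℕ → Ω → ℝ → ℝ}
    (hX : ∀ n s, Measurable fun ω => X n ω s)
    (hXΓ : ∀ ε > 0, Tendsto (fun n => P {ω | ∃ s ∈ S, ε < |X n ω s - Γ ω s|}) atTop (𝓝 0))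
    {s : ℝ} (hs : s ∈ S) : AEMeasurable (fun ω => Γ ω s) P := by
  refine TendstoInMeasure.aemeasurable (f := fun n ω => X n ω s) (u := atTop)
    (fun n => (hX n s).aemeasurable) (tendstoInMeasure_iff_dist.2 fun ε hε => ?_)
  refine tendsto_of_tendsto_of_tendsto_of_le_of_le tendsto_const_nhds (hXΓ (ε / 2) (by positivity))
    (fun _ => zero_le) fun n => measure_mono fun ω hω => ⟨s, hs, ?_⟩
  have hdist : ε ≤ dist (X n ω s) (Γ ω s) := hω
  rw [Real.dist_eq] at hdist
  linarith

end Oscillation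

/-- the linearly interpolated estimator of the extreme value index
inherits the uniform asymptotic behavior of the original estimator. -/
theorem interpolated_gamma_estimator
    {Ω : Type*} [MeasurableSpace Ω] (P : Measure Ω) [IsProbabilityMeasure P]
    (jn : ℕ → ℕ) (t : ℕ → ℕ → ℝ) (δ : ℕ → ℝ)
    (hjn : ∀ n, 1 ≤ jn n)
    (ht0 : ∀ n, t n 0 = 0) (htend : ∀ n, t n (jn n + 1) = 1)
    (htnonneg : ∀ n, 0 ≤ t n 1) (htle1 : ∀ n, t n (jn n) ≤ 1)
    (htmono : ∀ n j, 1 ≤ j → j < jn n → t n j < t n (j + 1))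
    (hδ : ∀ n, δ n = (Finset.Icc 1 (jn n + 1)).sup' ⟨1, Finset.mem_Icc.mpr (by omega)⟩
      (fun j => t n j - t n (j - 1)))
    (hδ0 : Tendsto δ atTop (𝓝 0))
    (γhat : ℕ → Ω → ℝ → ℝ) (γ : ℝ → ℝ) (Γ : Ω → ℝ → ℝ) (lam : ℕ → ℝ)
    (hmeas : ∀ n s, Measurable fun ω => γhat n ω s)
    (hΓ : ∀ ω, ContinuousOn (Γ ω) (Icc 0 1))
    (hlam_pos : ∀ n, 0 < lam n)
    -- condition (E(λₙ)): uniform convergence in probability of the standardized errors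
    (hE : ∀ ε > 0, Tendsto
      (fun n => P {ω | ∃ s ∈ Icc (0:ℝ) 1, ε < |(γhat n ω s - γ s) / lam n - Γ ω s|})
      atTop (𝓝 0))
    -- smoothness: sup_{|s-u|≤δₙ} |γ s - γ u| = o(λₙ)
    (hsmooth : ∀ ε > 0, ∀ᶠ n in atTop, ∀ s ∈ Icc (0:ℝ) 1, ∀ u ∈ Icc (0:ℝ) 1,
      |s - u| ≤ δ n → |γ s - γ u| ≤ ε * lam n) :
    ∀ ε > 0, Tendsto
      (fun n => P {ω | ∃ s ∈ Icc (0:ℝ) 1,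
        ε < |(linInterp (jn n) (t n) (γhat n ω) s - γ s) / lam n - Γ ω s|})
      atTop (𝓝 0) := by
  intro ε hε
  have hε3 : 0 < ε / 3 := by positivity
  have hgrid : ∀ n, IsMeshGrid (jn n) (t n) (δ n) := fun n =>
    ⟨hjn n, ht0 n, htend n, htnonneg n, htle1 n, htmono n, fun j hj =>
      hδ n ▸ Finset.le_sup' (fun j => t n j - t n (j - 1)) hj⟩
  have hΓm : ∀ s ∈ Icc (0:ℝ) 1, AEMeasurable (fun ω => Γ ω s) P := fun s hs =>
    aemeasurable_of_tendsto_sup_in_measure (fun n s => ((hmeas n s).sub_const _).div_const _) hE hs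
  refine tendsto_of_tendsto_of_tendsto_of_le_of_le' tendsto_const_nhds
    (by simpa using (hE (ε / 3) hε3).add (tendsto_measure_oscillation_le hε3 hΓ hΓm hδ0))
    (.of_forall fun _ => zero_le) ?_
  filter_upwards [hsmooth (ε / 3) hε3] with n hγ
  refine (measure_mono ?_).trans (measure_union_le _ _)
  rintro ω ⟨s, hs, hlt⟩
  by_contra hω
  simp only [mem_union, mem_ofPred_eq, not_or, not_exists, not_and, not_lt] at hω
  have := (hgrid n).abs_linInterp_sub_le (hlam_pos n) hω.1 hγ hω.2 hs
  linarith
end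

section
/- Assume that h(n) := n/k_n is regularly varying with index κ ∈ (0,1] in the sense that h(⌊cn⌋)/h(n) → c^κ as n → ∞ for every c > 0, that k_{n−1}/k_n − 1 = o(λ_n), and that sup_{c∈[c₀,1]} λ_{⌊cn⌋}/λ_n = O(1) for every c₀ ∈ (0,1). If conditions M(λ_n) and S(λ_n) hold, then sup_{|s−t|≤δ_n} |γ_s − γ_t| = o(λ_n). -/
open MeasureTheory Filter Topology Set

/-- `gfun y γ = (y^γ - 1)/γ`, read as `log y` for `γ = 0`. -/
noncomputable def gfun (y γ : ℝ) : ℝ := if γ = 0 then Real.log y else (y ^ γ - 1) / γ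

/-!
Fix a large level `Y` and compare the processes at two nearby points `s, u`. By M and
`τ < τ_max`, the tail quantile `U_u(y n/kₙ)`, `y ∈ [Y, Y³]`, lies above the threshold
`U_u(n/kₙ) + τ a_u` of condition S, and S then says that `X_s` rarely falls more than
`O(λₙ a_u)` below `X_u` there. Hence the tail quantiles of `X_s` and `X_u` agree up to
`O(λₙ (a_s + a_u))`, after a shift of the level by `O(λₙ)` that costs as much by Lipschitz
continuity of `y ↦ (y^γ - 1)/γ`. Combined with M this gives
`U_s(n/kₙ) - U_u(n/kₙ) + a_s g_{γ_s}(y) - a_u g_{γ_u}(y) = O(λₙ (a_s + a_u))` at `y = Y, Y², Y³`.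
Since `g_γ(Y³) - g_γ(Y²) = Y^γ (g_γ(Y²) - g_γ(Y))`, differences of consecutive levels first
eliminate the location term and then the scales, leaving `Y^{γ_s} - Y^{γ_u} = O(λₙ)`.
-/

open ProbabilityTheory

lemma gfun_mul (γ : ℝ) {y r : ℝ} (hy : 0 < y) (hr : 0 < r) :
    gfun (y * r) γ = gfun y γ + y ^ γ * gfun r γ := by
  unfold gfun
  split_ifs with h
  · simp [h, Real.log_mul hy.ne' hr.ne']
  · rw [Real.mul_rpow hy.le hr.le]
    field_simp
    ring

lemma gfun_mul_sub_gfun_mul (γ : ℝ) {y r s : ℝ} (hy : 0 < y) (hr : 0 < r) (hs : 0 < s) :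
    gfun (y * r) γ - gfun (y * s) γ = y ^ γ * (gfun r γ - gfun s γ) := by
  rw [gfun_mul γ hy hr, gfun_mul γ hy hs]
  ring

lemma hasDerivAt_gfun (γ : ℝ) {y : ℝ} (hy : 0 < y) :
    HasDerivAt (fun y => gfun y γ) (y ^ (γ - 1)) y := by
  unfold gfun
  split_ifs with h
  · simpa [h, Real.rpow_neg_one] using Real.hasDerivAt_log hy.ne'
  · exact (((Real.hasDerivAt_rpow_const (p := γ) (Or.inl hy.ne')).sub_const 1).div_const
      γ).congr_deriv (by field_simp)

lemma log_le_gfun {y γ : ℝ} (hy : 1 ≤ y) (hγ : 0 ≤ γ) : Real.log y ≤ gfun y γ := by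
  unfold gfun
  split_ifs with h
  · rfl
  · rw [le_div_iff₀ (lt_of_le_of_ne hγ (Ne.symm h)), Real.rpow_def_of_pos (by linarith)]
    linarith [Real.add_one_le_exp (Real.log y * γ)]

lemma continuousOn_gfun_Icc (γ B : ℝ) : ContinuousOn (fun y => gfun y γ) (Icc 1 B) :=
  fun _ hx => (hasDerivAt_gfun γ (by linarith [hx.1])).continuousAt.continuousWithinAt

lemma differentiableOn_gfun_Ioo (γ B : ℝ) : DifferentiableOn ℝ (fun y => gfun y γ) (Ioo 1 B) :=
  fun _ hx => (hasDerivAt_gfun γ (by linarith [hx.1])).differentiableAt.differentiableWithinAt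

section GfunIncrements

variable {y₁ y₂ γ Γ B : ℝ}

lemma gfun_sub_le (hγ : |γ| ≤ Γ) (h₁ : 1 ≤ y₁) (h₁₂ : y₁ ≤ y₂) (h₂ : y₂ ≤ B) :
    gfun y₂ γ - gfun y₁ γ ≤ B ^ Γ * (y₂ - y₁) := by
  refine (convex_Icc 1 B).image_sub_le_mul_sub_of_deriv_le (continuousOn_gfun_Icc γ B)
    (by simpa using differentiableOn_gfun_Ioo γ B) (fun x hx => ?_)
    y₁ ⟨h₁, h₁₂.trans h₂⟩ y₂ ⟨h₁.trans h₁₂, h₂⟩ h₁₂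
  rw [interior_Icc] at hx
  rw [(hasDerivAt_gfun γ (by linarith [hx.1])).deriv]
  calc x ^ (γ - 1) ≤ x ^ Γ :=
        Real.rpow_le_rpow_of_exponent_le hx.1.le (by linarith [le_abs_self γ])
    _ ≤ B ^ Γ := Real.rpow_le_rpow (by linarith [hx.1]) hx.2.le ((abs_nonneg γ).trans hγ)

lemma le_gfun_sub (hγ : |γ| ≤ Γ) (h₁ : 1 ≤ y₁) (h₁₂ : y₁ ≤ y₂) (h₂ : y₂ ≤ B) :
    B ^ (-Γ - 1) * (y₂ - y₁) ≤ gfun y₂ γ - gfun y₁ γ := by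
  refine (convex_Icc 1 B).mul_sub_le_image_sub_of_le_deriv (continuousOn_gfun_Icc γ B)
    (by simpa using differentiableOn_gfun_Ioo γ B) (fun x hx => ?_)
    y₁ ⟨h₁, h₁₂.trans h₂⟩ y₂ ⟨h₁.trans h₁₂, h₂⟩ h₁₂
  rw [interior_Icc] at hx
  rw [(hasDerivAt_gfun γ (by linarith [hx.1])).deriv]
  calc B ^ (-Γ - 1) ≤ x ^ (-Γ - 1) :=
        Real.rpow_le_rpow_of_nonpos (by linarith [hx.1]) hx.2.le
          (by linarith [(abs_nonneg γ).trans hγ])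
    _ ≤ x ^ (γ - 1) :=
        Real.rpow_le_rpow_of_exponent_le hx.1.le (by linarith [neg_abs_le γ])

end GfunIncrements

lemma le_gfun_of_le_mul_log {y g t : ℝ} (hy : 1 ≤ y) (ht : t ≤ Real.log y)
    (htg : t ≤ (1 + t * g) * Real.log y) : t ≤ gfun y g := by
  rcases le_or_gt 0 g with hg | hg
  · exact ht.trans (log_le_gfun hy hg)
  have hL := Real.log_nonneg hy
  rw [gfun, if_neg hg.ne, le_div_iff_of_neg hg, Real.rpow_def_of_pos (by linarith)]
  -- `exp (g L) ≤ 1 / (1 - g L) ≤ 1 + t g`, the second step being `htg`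
  have hinv : Real.exp (Real.log y * g) * (1 - g * Real.log y) ≤ 1 := by
    have h := Real.add_one_le_exp (-(Real.log y * g))
    rw [Real.exp_neg] at h
    have := mul_le_mul_of_nonneg_left h (Real.exp_pos (Real.log y * g)).le
    rw [mul_inv_cancel₀ (Real.exp_pos _).ne'] at this
    linarith
  have hone : 1 ≤ (1 + t * g) * (1 - g * Real.log y) := by
    nlinarith [mul_le_mul_of_nonneg_left htg (neg_nonneg.2 hg.le)]
  nlinarith [mul_nonneg hL (neg_nonneg.2 hg.le)]

lemma exists_add_le_gfun {K : Set ℝ} (hK : IsCompact K) {τ : ℝ}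
    (hτ : ∀ g ∈ K, g < 0 → τ < -1 / g) :
    ∃ c₀ > 0, ∃ Y₁ ≥ 1, ∀ g ∈ K, ∀ y ≥ Y₁, τ + c₀ ≤ gfun y g := by
  wlog hτ₀ : 0 ≤ τ generalizing τ
  · obtain ⟨c₀, hc₀, Y₁, hY₁, h⟩ :=
      this (τ := 0) (fun g _ hg => div_pos_of_neg_of_neg (by norm_num) hg) le_rfl
    exact ⟨c₀, hc₀, Y₁, hY₁, fun g hg y hy => by linarith [h g hg y hy]⟩
  obtain ⟨Γ, hΓ, hKΓ⟩ := hK.isBounded.exists_pos_norm_le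
  obtain ⟨m, hm, hmK⟩ := hK.exists_forall_le' (f := fun g => 1 + τ * g)
    (by fun_prop) (a := 0) fun g hg => by
      rcases lt_or_ge g 0 with hg0 | hg0
      · have := (lt_div_iff_of_neg hg0).1 (hτ g hg hg0)
        linarith
      · positivity
  set c₀ := m / (2 * Γ) with hc₀
  set t := τ + c₀
  have hc₀Γ : c₀ * Γ = m / 2 := by rw [hc₀]; field_simp
  have hmargin : ∀ g ∈ K, m / 2 ≤ 1 + t * g := fun g hg => by
    have h1 := hmK g hg
    have h2 : -Γ ≤ g := neg_le_of_abs_le (hKΓ g hg)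
    nlinarith [mul_le_mul_of_nonneg_left h2 (by positivity : (0:ℝ) ≤ c₀)]
  refine ⟨c₀, by positivity, Real.exp (max t (2 * t / m)), Real.one_le_exp (by positivity),
    fun g hg y hy => ?_⟩
  have hy₁ : 1 ≤ y := (Real.one_le_exp (by positivity)).trans hy
  have hL : max t (2 * t / m) ≤ Real.log y := (Real.le_log_iff_exp_le (by linarith)).2 hy
  refine le_gfun_of_le_mul_log hy₁ ((le_max_left _ _).trans hL) ?_
  calc t = m / 2 * (2 * t / m) := by field_simp
    _ ≤ (1 + t * g) * Real.log y :=
      mul_le_mul (hmargin g hg) ((le_max_right _ _).trans hL) (by positivity)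
        (by linarith [hmargin g hg])

lemma abs_sub_mul_le_of_abs_div_sub_le {a A g η : ℝ} (hA : 0 < A) (h : |a / A - g| ≤ η) :
    |a - A * g| ≤ A * η := by
  rw [show a - A * g = A * (a / A - g) by field_simp, abs_mul, abs_of_pos hA]
  exact mul_le_mul_of_nonneg_left h hA.le

lemma abs_sub_le_of_abs_mul_sub_le {A₁ A₂ x₁ x₂ w₁ w₂ d E W : ℝ} (hA₁ : 0 < A₁) (hA₂ : 0 < A₂)
    (hd : 0 < d) (hx₁ : d ≤ x₁) (hx₂ : d ≤ x₂) (hw₂ : |w₂| ≤ W) (hE : 2 * E ≤ d)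
    (h₀ : |A₁ * x₁ - A₂ * x₂| ≤ E * (A₁ + A₂))
    (h₁ : |A₁ * x₁ * w₁ - A₂ * x₂ * w₂| ≤ E * (A₁ + A₂)) :
    |w₁ - w₂| ≤ 4 * (1 + W) * E / d := by
  have hmass : d * (A₁ + A₂) ≤ 4 * (A₁ * x₁) := by
    nlinarith [(abs_le.1 h₀).1, mul_le_mul_of_nonneg_left hx₁ hA₁.le,
      mul_le_mul_of_nonneg_left hx₂ hA₂.le]
  have hkey : A₁ * x₁ * |w₁ - w₂| ≤ (1 + W) * (E * (A₁ + A₂)) := by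
    calc A₁ * x₁ * |w₁ - w₂|
        = |A₁ * x₁ * (w₁ - w₂)| := by rw [abs_mul, abs_of_pos (show 0 < A₁ * x₁ by nlinarith)]
      _ = |(A₁ * x₁ * w₁ - A₂ * x₂ * w₂) - (A₁ * x₁ - A₂ * x₂) * w₂| := by ring_nf
      _ ≤ E * (A₁ + A₂) + E * (A₁ + A₂) * W := by
          refine (abs_sub _ _).trans (add_le_add h₁ ?_)
          rw [abs_mul]
          exact mul_le_mul h₀ hw₂ (abs_nonneg _) ((abs_nonneg _).trans h₀)
      _ = (1 + W) * (E * (A₁ + A₂)) := by ring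
  rw [le_div_iff₀ hd]
  refine le_of_mul_le_mul_left ?_ (by positivity : 0 < A₁ + A₂)
  nlinarith [mul_le_mul_of_nonneg_right hmass (abs_nonneg (w₁ - w₂))]

lemma abs_log_sub_log_le {x y m : ℝ} (hm : 0 < m) (hx : m ≤ x) (hy : m ≤ y) :
    |Real.log x - Real.log y| ≤ |x - y| / m := by
  have key : ∀ a b, m ≤ a → m ≤ b → Real.log a - Real.log b ≤ |a - b| / m := by
    intro a b ha hb
    have ha₀ : 0 < a := hm.trans_le ha
    have hb₀ : 0 < b := hm.trans_le hb
    rw [← Real.log_div (by positivity) (by positivity)]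
    calc Real.log (a / b) ≤ a / b - 1 := Real.log_le_sub_one_of_pos (by positivity)
      _ = (a - b) / b := by field_simp
      _ ≤ |a - b| / m := div_le_div₀ (abs_nonneg _) (le_abs_self _) hm hb
  exact abs_sub_le_iff.2 ⟨key x y hx hy, by rw [abs_sub_comm x y]; exact key y x hy hx⟩

lemma abs_sub_mul_log_le_of_abs_gfun_combination_le {c A₁ A₂ γ₁ γ₂ Γ Y E : ℝ}
    (hA₁ : 0 < A₁) (hA₂ : 0 < A₂) (hY : 1 < Y) (hγ₁ : |γ₁| ≤ Γ) (hγ₂ : |γ₂| ≤ Γ)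
    (hE : E ≤ (Y ^ 2) ^ (-Γ - 1) * (Y ^ 2 - Y) / 4)
    (hD : ∀ y ∈ ({Y, Y ^ 2, Y ^ 3} : Set ℝ),
      |c + A₁ * gfun y γ₁ - A₂ * gfun y γ₂| ≤ E * (A₁ + A₂)) :
    |γ₁ - γ₂| * Real.log Y ≤
      8 * (1 + Y ^ Γ) * Y ^ Γ / ((Y ^ 2) ^ (-Γ - 1) * (Y ^ 2 - Y)) * E := by
  have hY₀ : 0 < Y := by linarith
  have hYY : Y ≤ Y ^ 2 := by nlinarith
  set d := (Y ^ 2) ^ (-Γ - 1) * (Y ^ 2 - Y)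
  have hd : 0 < d := mul_pos (by positivity) (by nlinarith)
  have hincr : ∀ γ, |γ| ≤ Γ → d ≤ gfun (Y ^ 2) γ - gfun Y γ :=
    fun γ hγ => le_gfun_sub hγ hY.le hYY le_rfl
  have hstep : ∀ γ, gfun (Y ^ 3) γ - gfun (Y ^ 2) γ = Y ^ γ * (gfun (Y ^ 2) γ - gfun Y γ) := by
    intro γ
    have := gfun_mul_sub_gfun_mul γ hY₀ (by positivity : 0 < Y ^ 2) hY₀
    rwa [show Y * Y ^ 2 = Y ^ 3 by ring, show Y * Y = Y ^ 2 by ring] at this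
  have hdiff : ∀ y y' : ℝ, y ∈ ({Y, Y ^ 2, Y ^ 3} : Set ℝ) → y' ∈ ({Y, Y ^ 2, Y ^ 3} : Set ℝ) →
      |A₁ * (gfun y γ₁ - gfun y' γ₁) - A₂ * (gfun y γ₂ - gfun y' γ₂)| ≤ 2 * E * (A₁ + A₂) := by
    intro y y' hy hy'
    calc _ = |(c + A₁ * gfun y γ₁ - A₂ * gfun y γ₂) - (c + A₁ * gfun y' γ₁ - A₂ * gfun y' γ₂)| := by
          ring_nf
      _ ≤ E * (A₁ + A₂) + E * (A₁ + A₂) := (abs_sub _ _).trans (add_le_add (hD y hy) (hD y' hy'))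
      _ = 2 * E * (A₁ + A₂) := by ring
  have hw : |Y ^ γ₂| ≤ Y ^ Γ := by
    rw [abs_of_pos (by positivity)]
    exact Real.rpow_le_rpow_of_exponent_le hY.le ((le_abs_self _).trans hγ₂)
  have hw_sub := abs_sub_le_of_abs_mul_sub_le hA₁ hA₂ hd (hincr γ₁ hγ₁) (hincr γ₂ hγ₂) hw
    (by linarith) (hdiff (Y ^ 2) Y (by simp) (by simp))
    (by rw [mul_assoc, mul_assoc, mul_comm _ (Y ^ γ₁), mul_comm _ (Y ^ γ₂), ← hstep, ← hstep]
        exact hdiff (Y ^ 3) (Y ^ 2) (by simp) (by simp))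
  have hlower : ∀ γ, |γ| ≤ Γ → Y ^ (-Γ) ≤ Y ^ γ :=
    fun γ hγ => Real.rpow_le_rpow_of_exponent_le hY.le (abs_le.1 hγ).1
  have hlog := abs_log_sub_log_le (by positivity) (hlower γ₁ hγ₁) (hlower γ₂ hγ₂)
  rw [Real.log_rpow hY₀, Real.log_rpow hY₀, ← sub_mul, abs_mul,
    abs_of_pos (Real.log_pos hY), Real.rpow_neg hY₀.le, div_inv_eq_mul] at hlog
  calc |γ₁ - γ₂| * Real.log Y ≤ |Y ^ γ₁ - Y ^ γ₂| * Y ^ Γ := hlog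
    _ ≤ 4 * (1 + Y ^ Γ) * (2 * E) / d * Y ^ Γ := by gcongr
    _ = 8 * (1 + Y ^ Γ) * Y ^ Γ / d * E := by ring

/-- The paper's `U(y) = F^←(1 - 1/y)`. -/
noncomputable def tailQuantile (F : ℝ → ℝ) (y : ℝ) : ℝ := sInf {x | 1 - 1 / y ≤ F x}

section TailQuantile

variable {F : ℝ → ℝ} {x y : ℝ}

lemma lt_of_lt_tailQuantile (hF : Monotone F) (hF₀ : Tendsto F atBot (𝓝 0)) (hy : 1 < y)
    (hx : x < tailQuantile F y) : F x < 1 - 1 / y := by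
  obtain ⟨z, hz⟩ := (hF₀.eventually (eventually_lt_nhds
    (by rw [sub_pos, div_lt_one (by linarith)]; exact hy : (0:ℝ) < 1 - 1 / y))).exists
  by_contra! h
  have hbdd : BddBelow {x | 1 - 1 / y ≤ F x} :=
    ⟨z, fun w hw => le_of_not_ge fun hwz => (hw.trans (hF hwz)).not_gt hz⟩
  exact (csInf_le hbdd h).not_gt hx

lemma le_tailQuantile (hF : Monotone F) (hF₁ : Tendsto F atTop (𝓝 1)) (hy : 0 < y)
    (hx : F x < 1 - 1 / y) : x ≤ tailQuantile F y := by
  obtain ⟨z, hz⟩ := (hF₁.eventually (eventually_ge_nhds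
    (by linarith [one_div_pos.2 hy] : 1 - 1 / y < 1))).exists
  exact le_csInf ⟨z, hz⟩ fun w hw => le_of_not_ge fun hwx => (hw.trans (hF hwx)).not_gt hx

end TailQuantile

section RandomVariables

variable {Ω : Type*} [MeasurableSpace Ω] {P : Measure Ω} [IsProbabilityMeasure P]
  {f g : Ω → ℝ}

lemma cdf_map_eq_probReal (hf : Measurable f) (x : ℝ) :
    cdf (P.map f) x = P.real {ω | f ω ≤ x} := by
  have := Measure.isProbabilityMeasure_map (μ := P) hf.aemeasurable
  rw [cdf_eq_real, map_measureReal_apply hf measurableSet_Iic]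
  rfl

lemma probReal_lt_eq_one_sub_cdf (hf : Measurable f) (x : ℝ) :
    P.real {ω | x < f ω} = 1 - cdf (P.map f) x := by
  rw [cdf_map_eq_probReal hf, ← probReal_compl_eq_one_sub (measurableSet_le hf measurable_const)]
  congr 1
  ext ω
  simp

lemma tailQuantile_sub_two_mul_le (hf : Measurable f) (hg : Measurable g) {y z a T β : ℝ}
    (hy : 1 < y) (hz : 0 < z) (ha : 0 < a) (hT : T + a ≤ tailQuantile (cdf (P.map g)) y)
    (hS : P.real {ω | a < |f ω - g ω| ∧ T < g ω} ≤ β) (hβ : 1 / z + β ≤ 1 / y) :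
    tailQuantile (cdf (P.map g)) y - 2 * a ≤ tailQuantile (cdf (P.map f)) z := by
  set Q := tailQuantile (cdf (P.map g)) y
  have hg_tail : cdf (P.map g) (Q - a) < 1 - 1 / y :=
    lt_of_lt_tailQuantile (monotone_cdf _) (tendsto_cdf_atBot _) hy (by linarith)
  have hcover : {ω | Q - a < g ω} ⊆ {ω | Q - 2 * a < f ω} ∪ {ω | a < |f ω - g ω| ∧ T < g ω} := by
    intro ω hω
    by_cases hfω : Q - 2 * a < f ω
    · exact Or.inl hfω
    · simp only [mem_ofPred_eq] at hω hfω ⊢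
      exact Or.inr ⟨by rw [abs_sub_comm]; exact lt_abs.2 (Or.inl (by linarith)), by linarith⟩
  have hunion := (measureReal_mono hcover).trans (measureReal_union_le (μ := P) _ _)
  rw [probReal_lt_eq_one_sub_cdf hg, probReal_lt_eq_one_sub_cdf hf] at hunion
  exact le_tailQuantile (monotone_cdf _) (tendsto_cdf_atTop _) hz (by linarith)

lemma tailQuantile_add_mul_gfun_le {f₁ f₂ : Ω → ℝ} (hf₁ : Measurable f₁) (hf₂ : Measurable f₂)
    {A₁ A₂ γ₁ γ₂ Γ τ h η Y₁ y B : ℝ} (hA₁ : 0 < A₁) (hA₂ : 0 < A₂) (hγ₂ : |γ₂| ≤ Γ)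
    (hh : 1 < h) (hη : 0 < η) (hY₁ : 1 ≤ Y₁) (hy : 0 < y) (hyY₁ : 1 / y + η ≤ 1 / Y₁)
    (hyB : y ≤ B) (hmargin : ∀ z ≥ Y₁, τ + 3 * η ≤ gfun z γ₂)
    (hM₁ : |(tailQuantile (cdf (P.map f₁)) (y * h) - tailQuantile (cdf (P.map f₁)) h) / A₁
      - gfun y γ₁| ≤ η)
    (hM₂ : ∀ z ∈ Icc 1 B, |(tailQuantile (cdf (P.map f₂)) (z * h)
      - tailQuantile (cdf (P.map f₂)) h) / A₂ - gfun z γ₂| ≤ η)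
    (hS : P.real {ω | η < |f₁ ω - f₂ ω| / A₂ ∧
      tailQuantile (cdf (P.map f₂)) h + τ * A₂ < f₂ ω} ≤ η / h) :
    tailQuantile (cdf (P.map f₂)) h + A₂ * gfun y γ₂ ≤
      tailQuantile (cdf (P.map f₁)) h + A₁ * gfun y γ₁ + (3 + B ^ Γ * B ^ 2) * η * (A₁ + A₂) := by
  have hB : 0 < B := hy.trans_le hyB
  set Q₁ := tailQuantile (cdf (P.map f₁))
  set Q₂ := tailQuantile (cdf (P.map f₂))
  -- S moves tail mass `η / h`, which shifts the level `1 / y` by `η`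
  set y' := (1 / y + η)⁻¹ with hy'
  have hY₁y' : Y₁ ≤ y' := (le_inv_comm₀ (by positivity) (by positivity)).1 (by simpa using hyY₁)
  have hy'y : y' ≤ y :=
    (inv_le_comm₀ (a := 1 / y + η) (by positivity) hy).2 (by rw [one_div]; linarith)
  have hy'₁ : 1 ≤ y' := hY₁.trans hY₁y'
  have hgap : y - y' ≤ η * B ^ 2 := by
    have : y - y' = η * (y * y') := by rw [hy']; field_simp; ring
    rw [this]
    gcongr
    nlinarith
  have hM₁' := abs_le.1 (abs_sub_mul_le_of_abs_div_sub_le hA₁ hM₁)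
  have hM₂' := abs_le.1 (abs_sub_mul_le_of_abs_div_sub_le hA₂ (hM₂ y' ⟨hy'₁, hy'y.trans hyB⟩))
  have hlip : A₂ * (gfun y γ₂ - gfun y' γ₂) ≤ A₂ * (B ^ Γ * (η * B ^ 2)) := by
    gcongr
    exact (gfun_sub_le hγ₂ hy'₁ hy'y hyB).trans (by gcongr)
  have hthreshold : Q₂ h + τ * A₂ + η * A₂ ≤ Q₂ (y' * h) := by
    nlinarith [mul_le_mul_of_nonneg_left (hmargin y' hY₁y') hA₂.le]
  have hlevels : 1 / (y * h) + η / h ≤ 1 / (y' * h) := by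
    rw [hy']
    field_simp
    rfl
  have hchain : Q₂ (y' * h) - 2 * (η * A₂) ≤ Q₁ (y * h) :=
    tailQuantile_sub_two_mul_le hf₁ hf₂ (one_lt_mul_of_le_of_lt hy'₁ hh) (by positivity)
      (by positivity) hthreshold (by simpa only [lt_div_iff₀ hA₂] using hS) hlevels
  nlinarith [mul_pos (mul_pos (by positivity : 0 < B ^ Γ * B ^ 2) hη) hA₁]

theorem exists_abs_sub_le_of_tailQuantile_expansions {K : Set ℝ} (hK : IsCompact K) {τ : ℝ}
    (hτ : ∀ g ∈ K, g < 0 → τ < -1 / g) :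
    ∃ B > 1, ∃ C, ∃ η₀ > 0, ∀ η ∈ Ioc 0 η₀, ∀ h > 1, ∀ {f₁ f₂ : Ω → ℝ} {A₁ A₂ γ₁ γ₂ : ℝ},
      Measurable f₁ → Measurable f₂ → 0 < A₁ → 0 < A₂ → γ₁ ∈ K → γ₂ ∈ K →
      (∀ z ∈ Icc 1 B, |(tailQuantile (cdf (P.map f₁)) (z * h)
        - tailQuantile (cdf (P.map f₁)) h) / A₁ - gfun z γ₁| ≤ η) →
      (∀ z ∈ Icc 1 B, |(tailQuantile (cdf (P.map f₂)) (z * h)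
        - tailQuantile (cdf (P.map f₂)) h) / A₂ - gfun z γ₂| ≤ η) →
      P.real {ω | η < |f₁ ω - f₂ ω| / A₂ ∧
        tailQuantile (cdf (P.map f₂)) h + τ * A₂ < f₂ ω} ≤ η / h →
      P.real {ω | η < |f₂ ω - f₁ ω| / A₁ ∧
        tailQuantile (cdf (P.map f₁)) h + τ * A₁ < f₁ ω} ≤ η / h →
      |γ₁ - γ₂| ≤ C * η := by
  obtain ⟨c₀, hc₀, Y₁, hY₁, hmargin⟩ := exists_add_le_gfun hK hτ
  obtain ⟨Γ, hΓ⟩ : ∃ Γ, ∀ γ ∈ K, |γ| ≤ Γ := hK.isBounded.exists_norm_le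
  set Y := 2 * Y₁
  have hY : 1 < Y := by linarith
  set B := Y ^ 3
  set ρ := 3 + B ^ Γ * B ^ 2
  set d := (Y ^ 2) ^ (-Γ - 1) * (Y ^ 2 - Y)
  have hρ : 0 < ρ := by positivity
  have hd : 0 < d := mul_pos (by positivity) (by nlinarith)
  refine ⟨B, one_lt_pow₀ hY (by norm_num), 8 * (1 + Y ^ Γ) * Y ^ Γ / d * ρ / Real.log Y,
    min (c₀ / 3) (min (1 / Y) (d / 4 / ρ)), by positivity, ?_⟩
  rintro η ⟨hη, hη₀⟩ h hh f₁ f₂ A₁ A₂ γ₁ γ₂ hf₁ hf₂ hA₁ hA₂ hγ₁ hγ₂ hM₁ hM₂ hS₁₂ hS₂₁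
  obtain ⟨hηc₀, hηY, hηd⟩ : η ≤ c₀ / 3 ∧ η ≤ 1 / Y ∧ η ≤ d / 4 / ρ := by
    simpa only [le_min_iff] using hη₀
  have hmargin' : ∀ γ ∈ K, ∀ z ≥ Y₁, τ + 3 * η ≤ gfun z γ :=
    fun γ hγ z hz => by linarith [hmargin γ hγ z hz]
  have hlevels : ∀ y ∈ ({Y, Y ^ 2, Y ^ 3} : Set ℝ), Y ≤ y ∧ y ≤ B := by
    rintro y (rfl | rfl | rfl)
    · exact ⟨le_rfl, le_self_pow₀ hY.le (by norm_num)⟩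
    · exact ⟨le_self_pow₀ hY.le (by norm_num), pow_le_pow_right₀ hY.le (by norm_num)⟩
    · exact ⟨le_self_pow₀ hY.le (by norm_num), le_rfl⟩
  have hshift : ∀ y ≥ Y, 1 / y + η ≤ 1 / Y₁ := fun y hy =>
    calc 1 / y + η ≤ 1 / Y + 1 / Y := add_le_add (one_div_le_one_div_of_le (by linarith) hy) hηY
      _ = 1 / Y₁ := by field_simp; ring
  have hD : ∀ y ∈ ({Y, Y ^ 2, Y ^ 3} : Set ℝ),
      |(tailQuantile (cdf (P.map f₁)) h - tailQuantile (cdf (P.map f₂)) h) + A₁ * gfun y γ₁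
        - A₂ * gfun y γ₂| ≤ ρ * η * (A₁ + A₂) := by
    intro y hy
    obtain ⟨hYy, hyB⟩ := hlevels y hy
    have hy₀ : 0 < y := by linarith
    have hy₁ : y ∈ Icc 1 B := ⟨by linarith, hyB⟩
    refine abs_le.2 ⟨?_, ?_⟩
    · linarith [tailQuantile_add_mul_gfun_le hf₁ hf₂ hA₁ hA₂ (hΓ γ₂ hγ₂) hh hη hY₁ hy₀
        (hshift y hYy) hyB (hmargin' γ₂ hγ₂) (hM₁ y hy₁) hM₂ hS₁₂]
    · linarith [tailQuantile_add_mul_gfun_le hf₂ hf₁ hA₂ hA₁ (hΓ γ₁ hγ₁) hh hη hY₁ hy₀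
        (hshift y hYy) hyB (hmargin' γ₁ hγ₁) (hM₂ y hy₁) hM₁ hS₂₁]
  have hosc := abs_sub_mul_log_le_of_abs_gfun_combination_le hA₁ hA₂ hY (hΓ γ₁ hγ₁)
    (hΓ γ₂ hγ₂) ((le_div_iff₀' hρ).1 hηd) hD
  rw [div_mul_eq_mul_div, le_div_iff₀ (Real.log_pos hY)]
  linarith

end RandomVariables

theorem gamma_local_oscillation_general
    {Ω : Type*} [MeasurableSpace Ω] (P : Measure Ω) [IsProbabilityMeasure P]
    (X : Ω → ℝ → ℝ)
    (hXmeas : ∀ s, Measurable fun ω => X ω s)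
    (γ : ℝ → ℝ) (hγcont : ContinuousOn γ (Icc 0 1))
    (F U : ℝ → ℝ → ℝ)
    (hF : ∀ s x, F s x = (P {ω | X ω s ≤ x}).toReal)
    (hU : ∀ s y, U s y = sInf {x : ℝ | 1 - 1 / y ≤ F s x})
    (A : ℕ → ℝ → ℝ) (hApos : ∀ n, ∀ s ∈ Icc (0:ℝ) 1, 0 < A n s)
    (k : ℕ → ℕ) (hk : ∀ n, 1 ≤ n → 1 ≤ k n ∧ k n ≤ n)
    (hkn0 : Tendsto (fun n : ℕ => (k n : ℝ) / n) atTop (𝓝 0))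
    (lam : ℕ → ℝ) (hlam_pos : ∀ n, 0 < lam n) (hlam_bdd : ∃ C, ∀ n, lam n ≤ C)
    (δ : ℕ → ℝ)
    -- the constant τ of condition S(λₙ): τ < τ_max = inf_t 1/γ_t⁻
    (τ : ℝ) (hτ : ∀ s ∈ Icc (0:ℝ) 1, γ s < 0 → τ < -1 / γ s)
    -- condition M(λₙ)
    (hM : ∀ y₀ y₁ : ℝ, 0 < y₀ → y₀ < y₁ → ∀ ε > 0, ∀ᶠ n : ℕ in atTop,
      ∀ s ∈ Icc (0:ℝ) 1, ∀ y ∈ Icc y₀ y₁,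
        |(U s (y * ((n : ℝ) / (k n : ℝ))) - U s ((n : ℝ) / (k n : ℝ))) / A n s
          - gfun y (γ s)| ≤ ε * lam n)
    -- condition S(λₙ)
    (hS : ∀ ε > 0, ∀ ε' > 0, ∀ᶠ n : ℕ in atTop,
      ∀ s ∈ Icc (0:ℝ) 1, ∀ u ∈ Icc (0:ℝ) 1, |s - u| ≤ δ n →
        (P {ω | ε * lam n < |X ω s - X ω u| / A n u ∧
            U u ((n : ℝ) / (k n : ℝ)) + τ * A n u < X ω u}).toReal
          ≤ ε' * (lam n * (k n : ℝ) / n)) :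
    ∀ ε > 0, ∀ᶠ n : ℕ in atTop,
      ∀ s ∈ Icc (0:ℝ) 1, ∀ u ∈ Icc (0:ℝ) 1, |s - u| ≤ δ n →
        |γ s - γ u| ≤ ε * lam n := by
  intro ε hε
  obtain ⟨B, hB, C, η₀, hη₀, hosc⟩ := exists_abs_sub_le_of_tailQuantile_expansions (P := P)
    (isCompact_Icc.image_of_continuousOn hγcont) (forall_mem_image.2 hτ)
  obtain ⟨Λ, hΛ⟩ := hlam_bdd
  obtain ⟨e, ⟨heΛ, heC⟩, he⟩ : ∃ e, (Λ * e ≤ η₀ ∧ C * e ≤ ε) ∧ 0 < e := by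
    have hsmall : ∀ a b : ℝ, 0 < b → ∀ᶠ e in 𝓝[>] (0:ℝ), a * e ≤ b := fun a b hb =>
      nhdsWithin_le_nhds <| ((continuous_const_mul a).tendsto' 0 0 (mul_zero a)).eventually
        (eventually_le_nhds hb)
    exact (((hsmall Λ η₀ hη₀).and (hsmall C ε hε)).and self_mem_nhdsWithin).exists
  have hUq : ∀ s, U s = tailQuantile (cdf (P.map fun ω => X ω s)) := fun s => by
    funext y
    simp only [hU, hF, tailQuantile, cdf_map_eq_probReal (hXmeas s), measureReal_def]
  filter_upwards [hM 1 B one_pos hB e he, hS e he e he,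
    hkn0.eventually (eventually_lt_nhds one_pos), eventually_ge_atTop 1] with n hMn hSn hkn hn
  intro s hs u hu hsu
  simp only [hUq] at hMn hSn
  have hk₀ : (0:ℝ) < k n := by exact_mod_cast (hk n hn).1
  have hh : 1 < (n : ℝ) / k n := (one_lt_div hk₀).2 ((div_lt_one (by exact_mod_cast hn)).1 hkn)
  have hrate : e * (lam n * k n / n) = e * lam n / (n / k n) := by rw [div_div_eq_mul_div]; ring
  calc |γ s - γ u|
      ≤ C * (e * lam n) :=
        hosc (e * lam n) ⟨mul_pos he (hlam_pos n), by nlinarith [hΛ n]⟩ _ hh (hXmeas s)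
          (hXmeas u) (hApos n s hs) (hApos n u hu) (mem_image_of_mem γ hs)
          (mem_image_of_mem γ hu) (hMn s hs) (hMn u hu) (hrate ▸ hSn s hs u hu hsu)
          (hrate ▸ hSn u hu s hs (by rwa [abs_sub_comm]))
    _ ≤ ε * lam n := by rw [← mul_assoc]; exact mul_le_mul_of_nonneg_right heC (hlam_pos n).le

/-- Theorem 2: under regular variation of `n/kₙ` and conditions M(λₙ)
and S(λₙ), sup_{|s-t|≤δₙ} |γ_s - γ_t| = o(λₙ). -/
theorem gamma_local_oscillation
    {Ω : Type*} [MeasurableSpace Ω] (P : Measure Ω) [IsProbabilityMeasure P]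
    (X : Ω → ℝ → ℝ)
    (hXmeas : ∀ s, Measurable fun ω => X ω s)
    (hXcont : ∀ ω, ContinuousOn (X ω) (Icc 0 1))
    (γ : ℝ → ℝ) (hγcont : ContinuousOn γ (Icc 0 1))
    (F U : ℝ → ℝ → ℝ)
    (hF : ∀ s x, F s x = (P {ω | X ω s ≤ x}).toReal)
    (hU : ∀ s y, U s y = sInf {x : ℝ | 1 - 1 / y ≤ F s x})
    (A : ℕ → ℝ → ℝ) (hApos : ∀ n, ∀ s ∈ Icc (0:ℝ) 1, 0 < A n s)
    (k : ℕ → ℕ) (hk : ∀ n, 1 ≤ n → 1 ≤ k n ∧ k n ≤ n)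
    (hkinfty : Tendsto (fun n : ℕ => (k n : ℝ)) atTop atTop)
    (hkn0 : Tendsto (fun n : ℕ => (k n : ℝ) / n) atTop (𝓝 0))
    (lam : ℕ → ℝ) (hlam_pos : ∀ n, 0 < lam n) (hlam_bdd : ∃ C, ∀ n, lam n ≤ C)
    (δ : ℕ → ℝ) (hδpos : ∀ n, 0 < δ n) (hδ0 : Tendsto δ atTop (𝓝 0))
    -- h(n) = n/kₙ is regularly varying with index κ ∈ (0,1]
    (κ : ℝ) (hκpos : 0 < κ) (hκle : κ ≤ 1)
    (hRV : ∀ c > 0, Tendsto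
      (fun n : ℕ => ((⌊c * (n : ℝ)⌋₊ : ℝ) / (k ⌊c * (n : ℝ)⌋₊ : ℝ)) / ((n : ℝ) / (k n : ℝ)))
      atTop (𝓝 (c ^ κ)))
    -- k_{n-1}/kₙ - 1 = o(λₙ)
    (hkratio : ∀ ε > 0, ∀ᶠ n : ℕ in atTop, |(k (n - 1) : ℝ) / (k n : ℝ) - 1| ≤ ε * lam n)
    -- sup_{c ∈ [c₀,1]} λ_{⌊cn⌋}/λₙ = O(1)
    (hlamO : ∀ c₀ : ℝ, 0 < c₀ → c₀ < 1 → ∃ C : ℝ, ∀ᶠ n : ℕ in atTop,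
      ∀ c ∈ Icc c₀ 1, lam ⌊c * (n : ℝ)⌋₊ / lam n ≤ C)
    -- the constant τ of condition S(λₙ): τ < τ_max = inf_t 1/γ_t⁻
    (τ : ℝ) (hτ : ∀ s ∈ Icc (0:ℝ) 1, γ s < 0 → τ < -1 / γ s)
    -- condition M(λₙ)
    (hM : ∀ y₀ y₁ : ℝ, 0 < y₀ → y₀ < y₁ → ∀ ε > 0, ∀ᶠ n : ℕ in atTop,
      ∀ s ∈ Icc (0:ℝ) 1, ∀ y ∈ Icc y₀ y₁,
        |(U s (y * ((n : ℝ) / (k n : ℝ))) - U s ((n : ℝ) / (k n : ℝ))) / A n s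
          - gfun y (γ s)| ≤ ε * lam n)
    -- condition S(λₙ)
    (hS : ∀ ε > 0, ∀ ε' > 0, ∀ᶠ n : ℕ in atTop,
      ∀ s ∈ Icc (0:ℝ) 1, ∀ u ∈ Icc (0:ℝ) 1, |s - u| ≤ δ n →
        (P {ω | ε * lam n < |X ω s - X ω u| / A n u ∧
            U u ((n : ℝ) / (k n : ℝ)) + τ * A n u < X ω u}).toReal
          ≤ ε' * (lam n * (k n : ℝ) / n)) :
    ∀ ε > 0, ∀ᶠ n : ℕ in atTop,
      ∀ s ∈ Icc (0:ℝ) 1, ∀ u ∈ Icc (0:ℝ) 1, |s - u| ≤ δ n →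
        |γ s - γ u| ≤ ε * lam n :=
  gamma_local_oscillation_general P X hXmeas γ hγcont F U hF hU A hApos k hk hkn0 lam hlam_pos
    hlam_bdd δ τ hτ hM hS
end

section
/- If conditions M(λ_n) and S(λ_n) hold (with constant τ from condition S), then for every τ̃ > τ there exists n_{τ̃} such that for all n > n_{τ̃} and all s, t ∈ [0,1] with |s − t| ≤ δ_n: U_s(n/k_n) + τ̃ a_s(n/k_n) ≥ U_t(n/k_n) + τ a_t(n/k_n). -/
/-!
Write `g_y(γ) = gfun y γ` and fix levels `y < y + h`, using `h` also as tolerance. By condition M,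
`U_u(y n/k)` is about `U_u(n/k) + g_y(γ_u) a_u`, so `X_u` exceeds `U_u(y n/k) - h a_u` with
probability more than `k/(y n)`. By condition S, off an event of probability `o(k/n)` the value
`X_s` is then within `h a_u` of `X_u`, hence exceeds `U_u(y n/k) - 2h a_u` with probability more
than `k/((y + h) n)`; so this level lies below `U_s((y + h) n/k) ≈ U_s(n/k) + g_{y+h}(γ_s) a_s`. The
resulting comparison `U_u + (g_y(γ_u) - 3h) a_u ≤ U_s + (g_{y+h}(γ_s) + h) a_s`, together with the
same comparison with `u` and `s` exchanged at levels `y + 1 < y + 1 + h`, which forces `a_s / a_u`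
to be nearly `1`, yields the claim as soon as `g_y(γ) > τ`; such `y` exist because `τ < τ_max`.
Continuity of `γ` and compactness of `[0, 1]` make finitely many choices of `(y, h)` suffice.
-/

open MeasureTheory Filter Topology Set

open ProbabilityTheory Metric

lemma gfun_eq_log_mul_dslope {y : ℝ} (hy : 0 < y) (γ : ℝ) :
    gfun y γ = Real.log y * dslope Real.exp 0 (γ * Real.log y) := by
  rcases eq_or_ne γ 0 with rfl | hγ
  · simp [gfun]
  rcases eq_or_ne (Real.log y) 0 with hl | hl
  · have : y = 1 := Real.eq_one_of_pos_of_log_eq_zero hy hl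
    simp [gfun, this]
  rw [gfun, if_neg hγ, dslope_of_ne _ (mul_ne_zero hγ hl), slope_def_field,
    Real.rpow_def_of_pos hy]
  simp only [Real.exp_zero, sub_zero]
  field_simp

lemma continuous_dslope_exp : Continuous (dslope Real.exp 0) :=
  continuous_iff_continuousAt.2 fun x => by
    rcases eq_or_ne x 0 with rfl | hx
    · exact continuousAt_dslope_same.2 Real.differentiableAt_exp
    · exact (continuousAt_dslope_of_ne hx).2 Real.continuous_exp.continuousAt

lemma Filter.Tendsto.gfun {α : Type*} {l : Filter α} {f g : α → ℝ} {y γ : ℝ}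
    (hf : Tendsto f l (𝓝 y)) (hg : Tendsto g l (𝓝 γ)) (hy : 0 < y) :
    Tendsto (fun a => gfun (f a) (g a)) l (𝓝 (gfun y γ)) := by
  have hlog := (Real.continuousAt_log hy.ne').tendsto.comp hf
  rw [gfun_eq_log_mul_dslope hy]
  refine (hlog.mul ((continuous_dslope_exp.tendsto _).comp (hg.mul hlog))).congr' ?_
  filter_upwards [hf.eventually (lt_mem_nhds hy)] with a ha
  exact (gfun_eq_log_mul_dslope ha (g a)).symm

lemma gfun_strictMonoOn (γ : ℝ) : StrictMonoOn (gfun · γ) (Ioi 0) := by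
  intro y hy y' hy' h
  rcases lt_trichotomy γ 0 with hγ | rfl | hγ
  · simp only [gfun, hγ.ne, if_false]
    exact div_lt_div_of_neg_of_lt hγ (by linarith [Real.rpow_lt_rpow_of_neg hy h hγ])
  · simpa [gfun] using Real.log_lt_log hy h
  · simp only [gfun, hγ.ne', if_false]
    exact div_lt_div_of_pos_right (by linarith [Real.rpow_lt_rpow (le_of_lt hy) h hγ]) hγ

/-- `sup_y gfun y γ` is `-1/γ` for `γ < 0` and `∞` otherwise. -/
lemma exists_lt_gfun {τ γ : ℝ} (h : γ < 0 → τ < -1 / γ) : ∃ y, 0 < y ∧ τ < gfun y γ := by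
  suffices ∀ᶠ y in atTop, τ < gfun y γ from ((eventually_gt_atTop 0).and this).exists
  rcases lt_trichotomy γ 0 with hγ | rfl | hγ
  · have hlim : Tendsto (fun y : ℝ => (y ^ γ - 1) / γ) atTop (𝓝 (-1 / γ)) := by
      simpa using ((tendsto_rpow_neg_atTop (neg_pos.2 hγ)).sub_const 1).div_const γ
    filter_upwards [hlim.eventually (lt_mem_nhds (h hγ))] with y hy
    simpa [gfun, hγ.ne] using hy
  · simpa [gfun] using Real.tendsto_log_atTop.eventually_gt_atTop τ
  · have hlim : Tendsto (fun y : ℝ => (y ^ γ - 1) / γ) atTop atTop :=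
      (tendsto_atTop_add_const_right _ (-1) (tendsto_rpow_atTop hγ)).atTop_div_const hγ |>.congr
        fun _ => by ring
    simpa [gfun, hγ.ne'] using hlim.eventually_gt_atTop τ

/-- The paper's `F^←(p)` for the cdf `F` of `μ`; thus `U_t(y) = quantile (law of X_t) (1 - 1/y)`.
-/
noncomputable def quantile (μ : Measure ℝ) (p : ℝ) : ℝ := sInf {x | p ≤ cdf μ x}

section Quantile

variable {μ : Measure ℝ} {p z : ℝ}

lemma cdf_lt_of_lt_quantile (hp : 0 < p) (hz : z < quantile μ p) : cdf μ z < p := by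
  obtain ⟨x₀, hx₀⟩ := ((tendsto_cdf_atBot μ).eventually (gt_mem_nhds hp)).exists
  have hbdd : BddBelow {x | p ≤ cdf μ x} :=
    ⟨x₀, fun x hx => le_of_not_gt fun hlt => (hx.trans (monotone_cdf μ hlt.le)).not_gt hx₀⟩
  exact not_le.1 (notMem_of_lt_csInf (s := {x | p ≤ cdf μ x}) hz hbdd)

lemma le_quantile_of_cdf_lt (hp : p < 1) (hz : cdf μ z < p) : z ≤ quantile μ p := by
  obtain ⟨x₁, hx₁⟩ := ((tendsto_cdf_atTop μ).eventually (lt_mem_nhds hp)).exists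
  exact le_csInf ⟨x₁, hx₁.le⟩ fun x hx =>
    le_of_not_gt fun hlt => (hx.trans (monotone_cdf μ hlt.le)).not_gt hz

end Quantile

section Transfer

variable {Ω : Type*} [MeasurableSpace Ω] {P : Measure Ω} [IsProbabilityMeasure P] {Y Z : Ω → ℝ}

lemma cdf_map_eq_measureReal (hY : Measurable Y) (x : ℝ) :
    cdf (P.map Y) x = P.real {ω | Y ω ≤ x} := by
  have : IsProbabilityMeasure (P.map Y) := Measure.isProbabilityMeasure_map hY.aemeasurable
  rw [cdf_eq_real, map_measureReal_apply hY measurableSet_Iic]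
  rfl

lemma measureReal_lt_eq_one_sub_cdf_map (hY : Measurable Y) (z : ℝ) :
    P.real {ω | z < Y ω} = 1 - cdf (P.map Y) z := by
  rw [cdf_map_eq_measureReal hY,
    ← probReal_compl_eq_one_sub (s := {ω | Y ω ≤ z}) (hY measurableSet_Iic)]
  congr 1
  ext ω
  simp

lemma sub_le_quantile_map_of_lt_quantile_map (hY : Measurable Y) (hZ : Measurable Z)
    {p p' z c : ℝ} (hp : 0 < p) (hp' : p' < 1) (hz : z < quantile (P.map Y) p)
    (hbad : P.real {ω | c < |Z ω - Y ω| ∧ z < Y ω} ≤ p' - p) :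
    z - c ≤ quantile (P.map Z) p' := by
  have hcover : {ω | z < Y ω} ⊆ {ω | z - c < Z ω} ∪ {ω | c < |Z ω - Y ω| ∧ z < Y ω} := by
    intro ω hω
    by_cases hc : c < |Z ω - Y ω|
    · exact Or.inr ⟨hc, hω⟩
    · exact Or.inl (show z - c < Z ω by
        linarith [neg_abs_le (Z ω - Y ω), not_lt.1 hc, show z < Y ω from hω])
  have htail := (measureReal_mono (μ := P) hcover).trans (measureReal_union_le _ _)
  rw [measureReal_lt_eq_one_sub_cdf_map hY, measureReal_lt_eq_one_sub_cdf_map hZ] at htail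
  exact le_quantile_of_cdf_lt hp' (by linarith [cdf_lt_of_lt_quantile hp hz])

end Transfer

lemma IsCompact.exists_finset_forall_dist_lt {α ι : Type*} [PseudoMetricSpace α] {K : Set α}
    (hK : IsCompact K) {R : ι → α → α → Prop}
    (h : ∀ t ∈ K, ∃ j, ∀ᶠ p in 𝓝[K] t ×ˢ 𝓝[K] t, R j p.1 p.2) :
    ∃ J : Finset ι, ∃ ζ > 0, ∀ u ∈ K, ∀ s ∈ K, dist s u < ζ → ∃ j ∈ J, R j u s := by
  have hopen : ∀ t ∈ K, ∃ j, ∃ W, IsOpen W ∧ t ∈ W ∧ ∀ u ∈ W ∩ K, ∀ s ∈ W ∩ K, R j u s := by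
    intro t ht
    obtain ⟨j, hj⟩ := h t ht
    obtain ⟨V, hV, hVR⟩ := eventually_prod_self_iff.1 hj
    obtain ⟨W, hWo, htW, hWV⟩ := mem_nhdsWithin.1 hV
    exact ⟨j, W, hWo, htW, fun u hu s hs => hVR u (hWV hu) s (hWV hs)⟩
  choose j W hWo htW hR using hopen
  obtain ⟨d, hd⟩ := hK.elim_finite_subcover (fun t : K => W t t.2) (fun t => hWo t t.2)
    fun t ht => mem_iUnion.2 ⟨⟨t, ht⟩, htW t ht⟩
  obtain ⟨ζ, hζ, hleb⟩ := lebesgue_number_lemma_of_metric hK (c := fun t : d => W t.1 t.1.2)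
    (fun t => hWo _ _) fun x hx => by
      obtain ⟨t, htd, hxt⟩ := mem_iUnion₂.1 (hd hx)
      exact mem_iUnion.2 ⟨⟨t, htd⟩, hxt⟩
  classical
  refine ⟨d.image fun t : K => j t.1 t.2, ζ, hζ, fun u hu s hs hsu => ?_⟩
  obtain ⟨t, hball⟩ := hleb u hu
  exact ⟨_, Finset.mem_image_of_mem _ t.2,
    hR t.1 t.1.2 u ⟨hball (mem_ball_self hζ), hu⟩ s ⟨hball (mem_ball.2 hsu), hs⟩⟩

/-- Coefficients for which the comparisons `x + α₁ a ≤ x' + β₁ b` and `x' + α₂ b ≤ x + β₂ a`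
imply `x + τ a ≤ x' + τ' b`, see `add_mul_le_add_mul_of_crossCondition`. -/
def CrossCondition (τ τ' α₁ β₁ α₂ β₂ : ℝ) : Prop :=
  τ < α₁ ∧ τ < α₂ ∧ β₁ < α₂ ∧ (β₁ - τ') * (β₂ - α₁) < (α₁ - τ) * (α₂ - β₁)

lemma add_mul_le_add_mul_of_crossCondition {x x' a b τ τ' α₁ β₁ α₂ β₂ : ℝ} (ha : 0 ≤ a)
    (hb : 0 ≤ b) (hc : CrossCondition τ τ' α₁ β₁ α₂ β₂)
    (h₁ : x + α₁ * a ≤ x' + β₁ * b) (h₂ : x' + α₂ * b ≤ x + β₂ * a) :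
    x + τ * a ≤ x' + τ' * b := by
  obtain ⟨hα₁, -, hgap, hcross⟩ := hc
  have hsum : (α₂ - β₁) * b ≤ (β₂ - α₁) * a := by linarith
  suffices (β₁ - τ') * b ≤ (α₁ - τ) * a by linarith
  rcases le_or_gt β₁ τ' with hβ | hβ
  · nlinarith
  refine le_of_mul_le_mul_left ?_ (sub_pos.2 hgap)
  calc (α₂ - β₁) * ((β₁ - τ') * b) = (β₁ - τ') * ((α₂ - β₁) * b) := by ring
    _ ≤ (β₁ - τ') * ((β₂ - α₁) * a) := mul_le_mul_of_nonneg_left hsum (sub_nonneg.2 hβ.le)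
    _ = ((β₁ - τ') * (β₂ - α₁)) * a := by ring
    _ ≤ ((α₁ - τ) * (α₂ - β₁)) * a := mul_le_mul_of_nonneg_right hcross.le ha
    _ = (α₂ - β₁) * ((α₁ - τ) * a) := by ring

lemma Filter.Tendsto.eventually_crossCondition {α : Type*} {l : Filter α} {α₁ β₁ α₂ β₂ : α → ℝ}
    {v w τ τ' : ℝ} (h₁ : Tendsto α₁ l (𝓝 v)) (h₁' : Tendsto β₁ l (𝓝 v))
    (h₂ : Tendsto α₂ l (𝓝 w)) (h₂' : Tendsto β₂ l (𝓝 w)) (hτ : τ < v) (hvw : v < w)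
    (hττ' : τ < τ') : ∀ᶠ x in l, CrossCondition τ τ' (α₁ x) (β₁ x) (α₂ x) (β₂ x) := by
  have hlim : (v - τ') * (w - v) < (v - τ) * (w - v) :=
    mul_lt_mul_of_pos_right (by linarith) (by linarith)
  exact (h₁.eventually (lt_mem_nhds hτ)).and <| (h₂.eventually (lt_mem_nhds (hτ.trans hvw))).and <|
    (h₁'.eventually_lt h₂ hvw).and <|
      ((h₁'.sub_const τ').mul (h₂'.sub h₁)).eventually_lt ((h₁.sub_const τ).mul (h₂.sub h₁'))
        (by simpa using hlim)

/-- The coefficients of the comparisons at levels `y < y + h` (from `u` to `s`) and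
`y + 1 < y + 1 + h` (from `s` to `u`), with tolerance `h`, satisfy `CrossCondition`. -/
def IsWindow (γ : ℝ → ℝ) (τ τ' y h u s : ℝ) : Prop :=
  0 < y ∧ 0 < h ∧ CrossCondition τ τ' (gfun y (γ u) - 3 * h) (gfun (y + h) (γ s) + h)
    (gfun (y + 1) (γ s) - 3 * h) (gfun (y + 1 + h) (γ u) + h)

lemma exists_eventually_isWindow {γ : ℝ → ℝ} (hγ : ContinuousOn γ (Icc 0 1)) {τ τ' : ℝ}
    (hτ : ∀ s ∈ Icc (0:ℝ) 1, γ s < 0 → τ < -1 / γ s) (hττ' : τ < τ') {t : ℝ}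
    (ht : t ∈ Icc (0:ℝ) 1) :
    ∃ j : ℝ × ℝ, ∀ᶠ p in 𝓝[Icc 0 1] t ×ˢ 𝓝[Icc 0 1] t, IsWindow γ τ τ' j.1 j.2 p.1 p.2 := by
  obtain ⟨y, hy, hτy⟩ := exists_lt_gfun (hτ t ht)
  set L := 𝓝 (0:ℝ) ×ˢ (𝓝[Icc 0 1] t ×ˢ 𝓝[Icc 0 1] t)
  have hh : Tendsto (fun x : ℝ × ℝ × ℝ => x.1) L (𝓝 0) := tendsto_fst
  have hγu : Tendsto (fun x : ℝ × ℝ × ℝ => γ x.2.1) L (𝓝 (γ t)) :=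
    (hγ t ht).tendsto.comp (tendsto_fst.comp tendsto_snd)
  have hγs : Tendsto (fun x : ℝ × ℝ × ℝ => γ x.2.2) L (𝓝 (γ t)) :=
    (hγ t ht).tendsto.comp (tendsto_snd.comp tendsto_snd)
  have hlevel : ∀ c : ℝ, Tendsto (fun x : ℝ × ℝ × ℝ => c + x.1) L (𝓝 c) := fun c => by
    simpa using tendsto_const_nhds.add hh
  have hy₁ : (0:ℝ) < y + 1 := by linarith
  have hev := Tendsto.eventually_crossCondition (τ := τ) (τ' := τ')
    (by simpa using (tendsto_const_nhds.gfun hγu hy).sub (hh.const_mul 3))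
    (by simpa using ((hlevel y).gfun hγs hy).add hh)
    (by simpa using (tendsto_const_nhds.gfun hγs hy₁).sub (hh.const_mul 3))
    (by simpa using ((hlevel (y + 1)).gfun hγu hy₁).add hh)
    hτy (gfun_strictMonoOn _ hy hy₁ (lt_add_one y)) hττ'
  obtain ⟨h, hwin, hh₀⟩ :=
    ((hev.curry.filter_mono nhdsWithin_le_nhds).and (self_mem_nhdsWithin (s := Ioi 0))).exists
  exact ⟨(y, h), hwin.mono fun p hp => ⟨hy, hh₀, hp⟩⟩

lemma add_mul_le_and_le_add_mul_of_abs_div_sub_le {x x' a g η : ℝ} (ha : 0 < a)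
    (h : |(x' - x) / a - g| ≤ η) : x + (g - η) * a ≤ x' ∧ x' ≤ x + (g + η) * a := by
  rw [abs_le, le_sub_iff_add_le, sub_le_iff_le_add, le_div_iff₀ ha, div_le_iff₀ ha] at h
  constructor <;> linarith

section Comparison

variable {Ω : Type*} [MeasurableSpace Ω] {P : Measure Ω} [IsProbabilityMeasure P]
  {X : Ω → ℝ → ℝ} {γ : ℝ → ℝ} {U : ℝ → ℝ → ℝ} {A : ℕ → ℝ → ℝ} {q lam δ : ℕ → ℝ} {τ : ℝ}
  (hXmeas : ∀ s, Measurable fun ω => X ω s)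
  (hU : ∀ s y, U s y = quantile (P.map fun ω => X ω s) (1 - 1 / y))
  (hApos : ∀ n, ∀ s ∈ Icc (0:ℝ) 1, 0 < A n s)
  (hq : Tendsto q atTop atTop) (hlam : ∃ C, ∀ n, lam n ≤ C)
  (hM : ∀ y₀ y₁ : ℝ, 0 < y₀ → y₀ < y₁ → ∀ ε > 0, ∀ᶠ n : ℕ in atTop,
    ∀ s ∈ Icc (0:ℝ) 1, ∀ y ∈ Icc y₀ y₁,
      |(U s (y * q n) - U s (q n)) / A n s - gfun y (γ s)| ≤ ε * lam n)
  (hS : ∀ ε > 0, ∀ ε' > 0, ∀ᶠ n : ℕ in atTop,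
    ∀ s ∈ Icc (0:ℝ) 1, ∀ u ∈ Icc (0:ℝ) 1, |s - u| ≤ δ n →
      P.real {ω | ε * lam n < |X ω s - X ω u| / A n u ∧ U u (q n) + τ * A n u < X ω u}
        ≤ ε' * (lam n / q n))
include hXmeas hU hApos hq hlam hM hS

lemma eventually_add_mul_le_add_mul {y h : ℝ} (hy : 0 < y) (hh : 0 < h) :
    ∀ᶠ n in atTop, ∀ u ∈ Icc (0:ℝ) 1, ∀ s ∈ Icc (0:ℝ) 1, |s - u| ≤ δ n →
      τ + 2 * h ≤ gfun y (γ u) →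
      U u (q n) + (gfun y (γ u) - 3 * h) * A n u
        ≤ U s (q n) + (gfun (y + h) (γ s) + h) * A n s := by
  obtain ⟨C, hC₀, hC⟩ : ∃ C > 0, ∀ n, lam n ≤ C :=
    let ⟨C, hC⟩ := hlam; ⟨max C 1, by positivity, fun n => (hC n).trans (le_max_left _ _)⟩
  set d := 1 / y - 1 / (y + h)
  have hd : 0 < d := sub_pos.2 (one_div_lt_one_div_of_lt hy (lt_add_of_pos_right y hh))
  filter_upwards [hM y (y + h) hy (by linarith) (h / C) (by positivity),
    hS (h / C) (by positivity) (d / C) (by positivity), hq.eventually_gt_atTop (1 / y)]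
    with n hMn hSn hqn u hu s hs hsu hτu
  have hAu := hApos n u hu
  have hqpos : 0 < q n := lt_trans (by positivity) hqn
  have hyq : 1 < y * q n := (div_lt_iff₀' hy).1 hqn
  have hε : h / C * lam n ≤ h := by
    calc h / C * lam n ≤ h / C * C := mul_le_mul_of_nonneg_left (hC n) (by positivity)
      _ = h := div_mul_cancel₀ h hC₀.ne'
  have hMu := (add_mul_le_and_le_add_mul_of_abs_div_sub_le hAu
    ((hMn u hu y ⟨le_rfl, by linarith⟩).trans hε)).1
  have hMs := (add_mul_le_and_le_add_mul_of_abs_div_sub_le (hApos n s hs)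
    ((hMn s hs (y + h) ⟨by linarith, le_rfl⟩).trans hε)).2
  have hthreshold : U u (q n) + τ * A n u ≤ U u (y * q n) - h * A n u := by nlinarith
  have hbad : P.real {ω | h * A n u < |X ω s - X ω u| ∧ U u (y * q n) - h * A n u < X ω u}
      ≤ (1 - 1 / ((y + h) * q n)) - (1 - 1 / (y * q n)) := by
    calc _ ≤ P.real {ω | h / C * lam n < |X ω s - X ω u| / A n u ∧
          U u (q n) + τ * A n u < X ω u} := by
          refine measureReal_mono fun ω ⟨hωs, hωu⟩ => ⟨?_, hthreshold.trans_lt hωu⟩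
          rw [lt_div_iff₀ hAu]
          nlinarith
      _ ≤ d / C * (lam n / q n) := hSn s hs u hu hsu
      _ ≤ d / C * (C / q n) := by gcongr; exact hC n
      _ = _ := by simp only [d]; field_simp; ring
  have htransfer := sub_le_quantile_map_of_lt_quantile_map (hXmeas u) (hXmeas s)
    (sub_pos.2 ((div_lt_one (by linarith)).2 hyq)) (sub_lt_self _ (by positivity))
    (by rw [← hU]; exact sub_lt_self _ (mul_pos hh hAu)) hbad
  rw [← hU] at htransfer
  linarith

lemma eventually_add_mul_le_add_mul_of_isWindow {τ' y h : ℝ} :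
    ∀ᶠ n in atTop, ∀ u ∈ Icc (0:ℝ) 1, ∀ s ∈ Icc (0:ℝ) 1, |s - u| ≤ δ n →
      IsWindow γ τ τ' y h u s → U u (q n) + τ * A n u ≤ U s (q n) + τ' * A n s := by
  by_cases hpos : 0 < y ∧ 0 < h
  swap
  · exact Eventually.of_forall fun n u _ s _ _ hw => absurd ⟨hw.1, hw.2.1⟩ hpos
  filter_upwards [eventually_add_mul_le_add_mul hXmeas hU hApos hq hlam hM hS hpos.1 hpos.2,
    eventually_add_mul_le_add_mul hXmeas hU hApos hq hlam hM hS (y := y + 1) (by linarith)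
      hpos.2]
    with n hus hsu u hu s hs hδ hw
  obtain ⟨-, -, hc⟩ := hw
  exact add_mul_le_add_mul_of_crossCondition (hApos n u hu).le (hApos n s hs).le hc
    (hus u hu s hs hδ (by linarith [hc.1]))
    (hsu s hs u hu (by rwa [abs_sub_comm]) (by linarith [hc.2.1]))

end Comparison

theorem threshold_comparison_general
    {Ω : Type*} [MeasurableSpace Ω] (P : Measure Ω) [IsProbabilityMeasure P]
    (X : Ω → ℝ → ℝ)
    (hXmeas : ∀ s, Measurable fun ω => X ω s)
    (γ : ℝ → ℝ) (hγcont : ContinuousOn γ (Icc 0 1))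
    (F U : ℝ → ℝ → ℝ)
    (hF : ∀ s x, F s x = (P {ω | X ω s ≤ x}).toReal)
    (hU : ∀ s y, U s y = sInf {x : ℝ | 1 - 1 / y ≤ F s x})
    (A : ℕ → ℝ → ℝ) (hApos : ∀ n, ∀ s ∈ Icc (0:ℝ) 1, 0 < A n s)
    (k : ℕ → ℕ) (hk : ∀ n, 1 ≤ n → 1 ≤ k n ∧ k n ≤ n)
    (hkn0 : Tendsto (fun n : ℕ => (k n : ℝ) / n) atTop (𝓝 0))
    (lam : ℕ → ℝ) (hlam_bdd : ∃ C, ∀ n, lam n ≤ C)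
    (δ : ℕ → ℝ) (hδ0 : Tendsto δ atTop (𝓝 0))
    -- the constant τ of condition S(λₙ): τ < τ_max = inf_t 1/γ_t⁻
    (τ : ℝ) (hτ : ∀ s ∈ Icc (0:ℝ) 1, γ s < 0 → τ < -1 / γ s)
    -- condition M(λₙ)
    (hM : ∀ y₀ y₁ : ℝ, 0 < y₀ → y₀ < y₁ → ∀ ε > 0, ∀ᶠ n : ℕ in atTop,
      ∀ s ∈ Icc (0:ℝ) 1, ∀ y ∈ Icc y₀ y₁,
        |(U s (y * ((n : ℝ) / (k n : ℝ))) - U s ((n : ℝ) / (k n : ℝ))) / A n s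
          - gfun y (γ s)| ≤ ε * lam n)
    -- condition S(λₙ)
    (hS : ∀ ε > 0, ∀ ε' > 0, ∀ᶠ n : ℕ in atTop,
      ∀ s ∈ Icc (0:ℝ) 1, ∀ u ∈ Icc (0:ℝ) 1, |s - u| ≤ δ n →
        (P {ω | ε * lam n < |X ω s - X ω u| / A n u ∧
            U u ((n : ℝ) / (k n : ℝ)) + τ * A n u < X ω u}).toReal
          ≤ ε' * (lam n * (k n : ℝ) / n)) :
    ∀ τt : ℝ, τ < τt → ∃ N : ℕ, ∀ n > N,
      ∀ s ∈ Icc (0:ℝ) 1, ∀ u ∈ Icc (0:ℝ) 1, |s - u| ≤ δ n →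
        U u ((n : ℝ) / (k n : ℝ)) + τ * A n u
          ≤ U s ((n : ℝ) / (k n : ℝ)) + τt * A n s := by
  intro τt hττt
  have hkn : Tendsto (fun n : ℕ => (k n : ℝ) / n) atTop (𝓝[>] 0) :=
    tendsto_nhdsWithin_iff.2 ⟨hkn0, (eventually_ge_atTop 1).mono fun n hn => mem_Ioi.2 <|
      div_pos (Nat.cast_pos.2 (hk n hn).1) (Nat.cast_pos.2 hn)⟩
  have hq : Tendsto (fun n : ℕ => (n : ℝ) / k n) atTop atTop := by
    simpa only [Pi.inv_def, inv_div] using hkn.inv_tendsto_nhdsGT_zero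
  have hUq : ∀ s y, U s y = quantile (P.map fun ω => X ω s) (1 - 1 / y) := fun s y => by
    simp only [hU, hF, quantile, cdf_map_eq_measureReal (hXmeas s)]
    rfl
  obtain ⟨J, ζ, hζ, hcover⟩ := isCompact_Icc.exists_finset_forall_dist_lt
    (R := fun (j : ℝ × ℝ) u s => IsWindow γ τ τt j.1 j.2 u s) fun t ht =>
      exists_eventually_isWindow hγcont hτ hττt ht
  obtain ⟨N, hN⟩ := eventually_atTop.1 <| (hδ0.eventually (gt_mem_nhds hζ)).and <|
    (eventually_all_finset J).2 fun j _ =>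
      eventually_add_mul_le_add_mul_of_isWindow (q := fun n : ℕ => (n : ℝ) / k n) hXmeas hUq
        hApos hq hlam_bdd hM (by simpa only [div_div_eq_mul_div, Measure.real] using hS)
  refine ⟨N, fun n hn s hs u hu hsu => ?_⟩
  obtain ⟨hδn, hwin⟩ := hN n hn.le
  obtain ⟨j, hj, hjwin⟩ := hcover u hu s hs (by rw [Real.dist_eq]; linarith)
  exact hwin j hj u hu s hs hsu hjwin

/-- Lemma 1, eq. (3.1): under M(λₙ) and S(λₙ), for every τ̃ > τ one has
eventually U_s(n/kₙ) + τ̃ a_s(n/kₙ) ≥ U_t(n/kₙ) + τ a_t(n/kₙ) for all |s-t| ≤ δₙ. -/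
theorem threshold_comparison
    {Ω : Type*} [MeasurableSpace Ω] (P : Measure Ω) [IsProbabilityMeasure P]
    (X : Ω → ℝ → ℝ)
    (hXmeas : ∀ s, Measurable fun ω => X ω s)
    (hXcont : ∀ ω, ContinuousOn (X ω) (Icc 0 1))
    (γ : ℝ → ℝ) (hγcont : ContinuousOn γ (Icc 0 1))
    (F U : ℝ → ℝ → ℝ)
    (hF : ∀ s x, F s x = (P {ω | X ω s ≤ x}).toReal)
    (hU : ∀ s y, U s y = sInf {x : ℝ | 1 - 1 / y ≤ F s x})
    (A : ℕ → ℝ → ℝ) (hApos : ∀ n, ∀ s ∈ Icc (0:ℝ) 1, 0 < A n s)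
    (k : ℕ → ℕ) (hk : ∀ n, 1 ≤ n → 1 ≤ k n ∧ k n ≤ n)
    (hkinfty : Tendsto (fun n : ℕ => (k n : ℝ)) atTop atTop)
    (hkn0 : Tendsto (fun n : ℕ => (k n : ℝ) / n) atTop (𝓝 0))
    (lam : ℕ → ℝ) (hlam_pos : ∀ n, 0 < lam n) (hlam_bdd : ∃ C, ∀ n, lam n ≤ C)
    (δ : ℕ → ℝ) (hδpos : ∀ n, 0 < δ n) (hδ0 : Tendsto δ atTop (𝓝 0))
    -- the constant τ of condition S(λₙ): τ < τ_max = inf_t 1/γ_t⁻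
    (τ : ℝ) (hτ : ∀ s ∈ Icc (0:ℝ) 1, γ s < 0 → τ < -1 / γ s)
    -- condition M(λₙ)
    (hM : ∀ y₀ y₁ : ℝ, 0 < y₀ → y₀ < y₁ → ∀ ε > 0, ∀ᶠ n : ℕ in atTop,
      ∀ s ∈ Icc (0:ℝ) 1, ∀ y ∈ Icc y₀ y₁,
        |(U s (y * ((n : ℝ) / (k n : ℝ))) - U s ((n : ℝ) / (k n : ℝ))) / A n s
          - gfun y (γ s)| ≤ ε * lam n)
    -- condition S(λₙ)
    (hS : ∀ ε > 0, ∀ ε' > 0, ∀ᶠ n : ℕ in atTop,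
      ∀ s ∈ Icc (0:ℝ) 1, ∀ u ∈ Icc (0:ℝ) 1, |s - u| ≤ δ n →
        (P {ω | ε * lam n < |X ω s - X ω u| / A n u ∧
            U u ((n : ℝ) / (k n : ℝ)) + τ * A n u < X ω u}).toReal
          ≤ ε' * (lam n * (k n : ℝ) / n)) :
    ∀ τt : ℝ, τ < τt → ∃ N : ℕ, ∀ n > N,
      ∀ s ∈ Icc (0:ℝ) 1, ∀ u ∈ Icc (0:ℝ) 1, |s - u| ≤ δ n →
        U u ((n : ℝ) / (k n : ℝ)) + τ * A n u
          ≤ U s ((n : ℝ) / (k n : ℝ)) + τt * A n s :=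
  threshold_comparison_general P X hXmeas γ hγcont F U hF hU A hApos k hk hkn0 lam hlam_bdd δ hδ0 τ
    hτ hM hS
end

section
/- Let γ : [0,1] → (0,∞) be continuous, let (r_n) be a sequence with r_n → ∞ and r_n > 1, and let (δ_n) be positive with δ_n → 0. In the model with U_t(y) := y^{γ_t} and a_t(y) := γ_t y^{γ_t}, the following are equivalent: (i) sup_{|s−t|≤δ_n} |(U_s(r_n) − U_t(r_n))/a_t(r_n)| = sup_{|s−t|≤δ_n} |(r_n^{γ_s−γ_t} − 1)/γ_t| → 0; (ii) sup_{|s−t|≤δ_n} |a_s(r_n)/a_t(r_n) − 1| = sup_{|s−t|≤δ_n} |(γ_s/γ_t) r_n^{γ_s−γ_t} − 1| → 0; (iii) (log r_n) · sup_{|s−t|≤δ_n} |γ_s − γ_t| → 0. -/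
open Filter Topology Set

/-- Example 1: in the model U_t(y) = y^{γ_t}, a_t(y) = γ_t y^{γ_t},
uniform local smoothness of the location function, of the scale function, and the rate
condition sup_{|s-t|≤δₙ}|γ_s - γ_t| = o(1/log rₙ) are all equivalent. -/
theorem pareto_model_smoothness_equivalence
    (γ : ℝ → ℝ) (hγcont : ContinuousOn γ (Icc 0 1))
    (hγpos : ∀ s ∈ Icc (0:ℝ) 1, 0 < γ s)
    (r : ℕ → ℝ) (hr1 : ∀ n, 1 < r n) (hr : Tendsto r atTop atTop)
    (δ : ℕ → ℝ) (hδpos : ∀ n, 0 < δ n) (hδ0 : Tendsto δ atTop (𝓝 0)) :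
    -- (i) sup_{|s-t|≤δₙ} |(U_s(rₙ) - U_t(rₙ))/a_t(rₙ)| = sup |(rₙ^{γ_s-γ_t}-1)/γ_t| → 0
    ((∀ ε > 0, ∀ᶠ n : ℕ in atTop, ∀ s ∈ Icc (0:ℝ) 1, ∀ u ∈ Icc (0:ℝ) 1,
        |s - u| ≤ δ n → |(r n ^ (γ s - γ u) - 1) / γ u| ≤ ε)
    -- (ii) sup_{|s-t|≤δₙ} |aₛ(rₙ)/a_t(rₙ) - 1| = sup |(γ_s/γ_t) rₙ^{γ_s-γ_t} - 1| → 0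
      ↔ (∀ ε > 0, ∀ᶠ n : ℕ in atTop, ∀ s ∈ Icc (0:ℝ) 1, ∀ u ∈ Icc (0:ℝ) 1,
        |s - u| ≤ δ n → |(γ s / γ u) * r n ^ (γ s - γ u) - 1| ≤ ε)) ∧
    -- (ii) ↔ (iii) log rₙ · sup_{|s-t|≤δₙ} |γ_s - γ_t| → 0
    ((∀ ε > 0, ∀ᶠ n : ℕ in atTop, ∀ s ∈ Icc (0:ℝ) 1, ∀ u ∈ Icc (0:ℝ) 1,
        |s - u| ≤ δ n → |(γ s / γ u) * r n ^ (γ s - γ u) - 1| ≤ ε)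
      ↔ (∀ ε > 0, ∀ᶠ n : ℕ in atTop, ∀ s ∈ Icc (0:ℝ) 1, ∀ u ∈ Icc (0:ℝ) 1,
        |s - u| ≤ δ n → Real.log (r n) * |γ s - γ u| ≤ ε)) := by
  obtain ⟨t₀, ht₀, hmin'⟩ := isCompact_Icc.exists_isMinOn ⟨0, by simp⟩ hγcont
  obtain ⟨t₁, ht₁, hmax'⟩ := isCompact_Icc.exists_isMaxOn ⟨0, by simp⟩ hγcont
  set m := γ t₀ with hm_def
  set M := γ t₁ with hM_def
  have hmin : ∀ y ∈ Icc (0:ℝ) 1, m ≤ γ y := fun y hy => hmin' hy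
  have hmax : ∀ y ∈ Icc (0:ℝ) 1, γ y ≤ M := fun y hy => hmax' hy
  have hm : 0 < m := hγpos t₀ ht₀
  have hM : 0 < M := hγpos t₁ ht₁
  have hLpos : ∀ n, 0 < Real.log (r n) := fun n => Real.log_pos (hr1 n)
  have hrpos : ∀ n, (0:ℝ) < r n := fun n => lt_trans one_pos (hr1 n)
  have hrE : ∀ n x, r n ^ x = Real.exp (Real.log (r n) * x) := fun n x =>
    Real.rpow_def_of_pos (hrpos n) x
  have hL1 : ∀ᶠ n in atTop, 1 ≤ Real.log (r n) := by
    filter_upwards [hr.eventually_ge_atTop (Real.exp 1)] with n hn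
    calc (1:ℝ) = Real.log (Real.exp 1) := (Real.log_exp 1).symm
    _ ≤ Real.log (r n) := Real.log_le_log (Real.exp_pos 1) hn
  have hUC : ∀ η > (0:ℝ), ∀ᶠ n in atTop, ∀ s ∈ Icc (0:ℝ) 1, ∀ u ∈ Icc (0:ℝ) 1,
      |s - u| ≤ δ n → |γ s - γ u| ≤ η := by
    intro η hη
    have huc := isCompact_Icc.uniformContinuousOn_of_continuous hγcont
    rw [Metric.uniformContinuousOn_iff] at huc
    obtain ⟨d, hd, hduc⟩ := huc η hη
    filter_upwards [hδ0.eventually (eventually_lt_nhds hd)] with n hn s hs u hu hsu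
    have hlt : dist s u < d := by rw [Real.dist_eq]; linarith
    exact le_of_lt (by simpa [Real.dist_eq] using hduc s hs u hu hlt)
  -- (iii) → (i)
  have hCA : (∀ ε > (0:ℝ), ∀ᶠ n : ℕ in atTop, ∀ s ∈ Icc (0:ℝ) 1, ∀ u ∈ Icc (0:ℝ) 1,
        |s - u| ≤ δ n → Real.log (r n) * |γ s - γ u| ≤ ε) →
      (∀ ε > (0:ℝ), ∀ᶠ n : ℕ in atTop, ∀ s ∈ Icc (0:ℝ) 1, ∀ u ∈ Icc (0:ℝ) 1,
        |s - u| ≤ δ n → |(r n ^ (γ s - γ u) - 1) / γ u| ≤ ε) := by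
    intro hC ε hε
    have hε' : (0:ℝ) < min 1 (m*ε/2) := lt_min one_pos (by positivity)
    filter_upwards [hC _ hε'] with n hn s hs u hu hsu
    have h1 := hn s hs u hu hsu
    have hLp := hLpos n
    have habs : |Real.log (r n) * (γ s - γ u)| = Real.log (r n) * |γ s - γ u| := by
      rw [abs_mul, abs_of_pos hLp]
    have hd1 : |Real.log (r n) * (γ s - γ u)| ≤ 1 := by
      rw [habs]; exact h1.trans (min_le_left _ _)
    have hexp : |Real.exp (Real.log (r n) * (γ s - γ u)) - 1|
        ≤ 2 * |Real.log (r n) * (γ s - γ u)| := Real.abs_exp_sub_one_le hd1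
    have hu0 := hγpos u hu
    rw [hrE n, abs_div, abs_of_pos hu0, div_le_iff₀ hu0]
    have h2 : |Real.log (r n) * (γ s - γ u)| ≤ m * ε / 2 := by
      rw [habs]; exact h1.trans (min_le_right _ _)
    have h3 : m ≤ γ u := hmin u hu
    nlinarith [abs_nonneg (Real.log (r n) * (γ s - γ u)), hε.le]
  -- (iii) → (ii)
  have hCB : (∀ ε > (0:ℝ), ∀ᶠ n : ℕ in atTop, ∀ s ∈ Icc (0:ℝ) 1, ∀ u ∈ Icc (0:ℝ) 1,
        |s - u| ≤ δ n → Real.log (r n) * |γ s - γ u| ≤ ε) →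
      (∀ ε > (0:ℝ), ∀ᶠ n : ℕ in atTop, ∀ s ∈ Icc (0:ℝ) 1, ∀ u ∈ Icc (0:ℝ) 1,
        |s - u| ≤ δ n → |(γ s / γ u) * r n ^ (γ s - γ u) - 1| ≤ ε) := by
    intro hC ε hε
    set c := m*ε/(2*M+1) with hc_def
    have hc : (0:ℝ) < c := by positivity
    have hcc : (2*M+1)*c = m*ε := by
      rw [hc_def]; field_simp
    have hε' : (0:ℝ) < min 1 c := lt_min one_pos hc
    filter_upwards [hC _ hε', hL1] with n hn hLn s hs u hu hsu
    have h1 := hn s hs u hu hsu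
    have hLp := hLpos n
    have habs : |Real.log (r n) * (γ s - γ u)| = Real.log (r n) * |γ s - γ u| := by
      rw [abs_mul, abs_of_pos hLp]
    have hd1 : |Real.log (r n) * (γ s - γ u)| ≤ 1 := by
      rw [habs]; exact h1.trans (min_le_left _ _)
    have hexp := Real.abs_exp_sub_one_le hd1
    have hu0 := hγpos u hu
    have hs0 := hγpos s hs
    set E := Real.exp (Real.log (r n) * (γ s - γ u)) with hEdef
    rw [hrE n]
    have hrw : γ s / γ u * E - 1 = (γ s * E - γ u) / γ u := by field_simp
    rw [hrw, abs_div, abs_of_pos hu0, div_le_iff₀ hu0]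
    have h2 : Real.log (r n) * |γ s - γ u| ≤ c := h1.trans (min_le_right _ _)
    have hdsmall : |γ s - γ u| ≤ c := by
      nlinarith [abs_nonneg (γ s - γ u), mul_le_mul_of_nonneg_right hLn (abs_nonneg (γ s - γ u))]
    have hMs : γ s ≤ M := hmax s hs
    have hmu : m ≤ γ u := hmin u hu
    have hEb : |E - 1| ≤ 2*c := by
      rw [habs] at hexp; nlinarith
    have htri : |γ s * E - γ u| ≤ γ s * |E - 1| + |γ s - γ u| := by
      calc |γ s * E - γ u| = |γ s * (E-1) + (γ s - γ u)| := by ring_nf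
      _ ≤ |γ s * (E-1)| + |γ s - γ u| := abs_add_le _ _
      _ = γ s * |E-1| + |γ s - γ u| := by rw [abs_mul, abs_of_pos hs0]
    nlinarith [mul_le_mul hMs hEb (abs_nonneg _) hM.le,
      mul_nonneg hε.le (sub_nonneg.2 hmu)]
  -- (i) → (iii)
  have hAC : (∀ ε > (0:ℝ), ∀ᶠ n : ℕ in atTop, ∀ s ∈ Icc (0:ℝ) 1, ∀ u ∈ Icc (0:ℝ) 1,
        |s - u| ≤ δ n → |(r n ^ (γ s - γ u) - 1) / γ u| ≤ ε) →
      (∀ ε > (0:ℝ), ∀ᶠ n : ℕ in atTop, ∀ s ∈ Icc (0:ℝ) 1, ∀ u ∈ Icc (0:ℝ) 1,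
        |s - u| ≤ δ n → Real.log (r n) * |γ s - γ u| ≤ ε) := by
    intro hA ε hε
    filter_upwards [hA (ε/M) (by positivity)] with n hn s hs u hu hsu
    have hLp := hLpos n
    have key : ∀ a ∈ Icc (0:ℝ) 1, ∀ b ∈ Icc (0:ℝ) 1, |a - b| ≤ δ n →
        Real.log (r n) * (γ a - γ b) ≤ ε := by
      intro a ha b hb hab
      have h1 := (abs_le.1 (hn a ha b hb hab)).2
      have hb0 := hγpos b hb
      have hMb : γ b ≤ M := hmax b hb
      rw [div_le_div_iff₀ hb0 hM] at h1
      have h2 : r n ^ (γ a - γ b) - 1 ≤ ε := by nlinarith [hε.le]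
      rw [hrE n] at h2
      have h3 : Real.exp (Real.log (r n) * (γ a - γ b)) ≤ 1 + ε := by linarith
      have h4 : Real.log (r n) * (γ a - γ b) ≤ Real.log (1 + ε) := by
        have := Real.log_le_log (Real.exp_pos _) h3
        rwa [Real.log_exp] at this
      have h5 : Real.log (1 + ε) ≤ ε := by
        have := Real.log_le_sub_one_of_pos (show (0:ℝ) < 1 + ε by positivity)
        linarith
      linarith
    rw [← abs_of_pos hLp, ← abs_mul]
    refine abs_le.2 ⟨?_, key s hs u hu hsu⟩
    have h6 := key u hu s hs (by rwa [abs_sub_comm])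
    have h7 : Real.log (r n) * (γ u - γ s) = -(Real.log (r n) * (γ s - γ u)) := by ring
    linarith
  -- (ii) → (iii)
  have hBC : (∀ ε > (0:ℝ), ∀ᶠ n : ℕ in atTop, ∀ s ∈ Icc (0:ℝ) 1, ∀ u ∈ Icc (0:ℝ) 1,
        |s - u| ≤ δ n → |(γ s / γ u) * r n ^ (γ s - γ u) - 1| ≤ ε) →
      (∀ ε > (0:ℝ), ∀ᶠ n : ℕ in atTop, ∀ s ∈ Icc (0:ℝ) 1, ∀ u ∈ Icc (0:ℝ) 1,
        |s - u| ≤ δ n → Real.log (r n) * |γ s - γ u| ≤ ε) := by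
    intro hB ε hε
    filter_upwards [hB (ε/2) (by positivity), hUC (m*ε/2) (by positivity)]
      with n hn hun s hs u hu hsu
    have hLp := hLpos n
    have key : ∀ a ∈ Icc (0:ℝ) 1, ∀ b ∈ Icc (0:ℝ) 1, |a - b| ≤ δ n →
        Real.log (r n) * (γ a - γ b) ≤ ε := by
      intro a ha b hb hab
      have ha0 := hγpos a ha
      have hb0 := hγpos b hb
      have h1 := (abs_le.1 (hn a ha b hb hab)).2
      have hub := hun a ha b hb hab
      have hma : m ≤ γ a := hmin a ha
      have hgb : γ b ≤ (1 + ε/2) * γ a := by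
        have := (abs_le.1 hub).1
        nlinarith
      set E := Real.exp (Real.log (r n) * (γ a - γ b)) with hEdef
      rw [hrE n] at h1
      have hE0 : 0 < E := Real.exp_pos _
      have h1' : γ a / γ b * E ≤ 1 + ε/2 := by linarith
      have h2 : γ a * E ≤ (1 + ε/2) * γ b := by
        rw [div_mul_eq_mul_div, div_le_iff₀ hb0] at h1'
        linarith
      have h3 : γ a * E ≤ (1 + ε/2)^2 * γ a := by nlinarith
      have hE : E ≤ (1 + ε/2)^2 := by nlinarith
      have h4 : Real.log (r n) * (γ a - γ b) ≤ Real.log ((1 + ε/2)^2) := by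
        have := Real.log_le_log hE0 hE
        rwa [hEdef, Real.log_exp] at this
      have h5 : Real.log ((1 + ε/2)^2) = 2 * Real.log (1 + ε/2) := by
        rw [Real.log_pow]; norm_num
      have h6 : Real.log (1 + ε/2) ≤ ε/2 := by
        have := Real.log_le_sub_one_of_pos (show (0:ℝ) < 1 + ε/2 by positivity)
        linarith
      linarith
    rw [← abs_of_pos hLp, ← abs_mul]
    refine abs_le.2 ⟨?_, key s hs u hu hsu⟩
    have h6 := key u hu s hs (by rwa [abs_sub_comm])
    have h7 : Real.log (r n) * (γ u - γ s) = -(Real.log (r n) * (γ s - γ u)) := by ring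
    linarith
  exact ⟨⟨fun h => hCB (hAC h), fun h => hCA (hBC h)⟩, hBC, hCB⟩
end

section
/- Let V_1, V_2, … be iid standard Pareto random variables (P{V_i > x} = x^{−1} for x ≥ 1) and X_t^{(i)} := V_i^{γ_t} for a continuous function γ : [0,1] → (0,∞), so that U_t(n/k_n) = (n/k_n)^{γ_t} and a_t(n/k_n) = γ_t (n/k_n)^{γ_t}. Let Û*_{n,t}(n/k_n) := ⟨X^{(n−k_n:n)}_·⟩_{n,t} be the linear interpolation of the pointwise (n−k_n)-th order statistics, and note X^{(n−k_n:n)}_u = V_{n−k_n:n}^{γ_u} for each u. Assume that (k_n/n) V_{n−k_n:n} → 1 in probability, let c ∈ (0,1) be fixed, and for each n let j(n) ∈ {2,…,j_n} and t_n := t_{n,j(n)−1} + c (t_{n,j(n)} − t_{n,j(n)−1}). If log(n/k_n) · (γ_{t_n} − γ_{t_{n,j(n)−1}}) → −∞ as n → ∞, then (Û*_{n,t_n}(n/k_n) − U_{t_n}(n/k_n))/a_{t_n}(n/k_n) → +∞ in probability, i.e., P{(Û*_{n,t_n}(n/k_n) − U_{t_n}(n/k_n))/a_{t_n}(n/k_n)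 > K} → 1 for every K > 0; in particular, the interpolated estimator Û*_{n,·}(n/k_n) is not uniformly consistent. -/
open MeasureTheory ProbabilityTheory Filter Topology Set
open scoped Classical

/-!
Write `a = t_{n,j(n)-1}`, `b = t_{n,j(n)}`, `R = n/kₙ`, and let `M` bound `γ` on `[0,1]`. On the
event `W ≥ R/2`, whose probability tends to one, the interpolant at `tₙ` is
`(1 - c) W^{γ_a} + c W^{γ_b} ≥ (1 - c) 2^{-M} R^{γ_a}`, while the normalisation is
`γ_{tₙ} R^{γ_{tₙ}} ≤ M R^{γ_{tₙ}}`. The standardized error is therefore bounded below by a positive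
multiple of `R^{γ_a - γ_{tₙ}} = exp(-log R · (γ_{tₙ} - γ_a)) → ∞`, minus a constant.
-/

section Grid

variable {jn : ℕ} {t : ℕ → ℝ}

lemma strictMonoOn_Icc_of_lt_add_one (ht : ∀ j, 1 ≤ j → j < jn → t j < t (j + 1)) :
    StrictMonoOn t (Icc 1 jn) :=
  strictMonoOn_of_lt_succ ordConnected_Icc fun a _ ha hsa => by
    rw [Order.succ_eq_add_one] at hsa ⊢
    exact ht a ha.1 (by simp only [mem_Icc] at hsa; omega)

lemma linInterp_eq_of_mem_Ioc (ht : ∀ j, 1 ≤ j → j < jn → t j < t (j + 1))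
    (z : ℝ → ℝ) {J : ℕ} (hJ : 2 ≤ J) (hJn : J ≤ jn) {x : ℝ} (hx : x ∈ Ioc (t (J - 1)) (t J)) :
    linInterp jn t z x
      = ((t J - x) * z (t (J - 1)) + (x - t (J - 1)) * z (t J)) / (t J - t (J - 1)) := by
  have hmono := (strictMonoOn_Icc_of_lt_add_one ht).monotoneOn
  have hcell : ∃ j, 2 ≤ j ∧ j ≤ jn ∧ t (j - 1) < x ∧ x ≤ t j := ⟨J, hJ, hJn, hx⟩
  have hx1 : ¬ x ≤ t 1 :=
    not_le.2 ((hmono ⟨le_rfl, by omega⟩ ⟨by omega, by omega⟩ (by omega)).trans_lt hx.1)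
  have hfind : Nat.find hcell = J := by
    refine (Nat.find_eq_iff hcell).2 ⟨⟨hJ, hJn, hx⟩, fun m hm ⟨hm2, _, hmx, _⟩ => ?_⟩
    have : t m ≤ t (J - 1) := hmono ⟨by omega, by omega⟩ ⟨by omega, by omega⟩ (by omega)
    linarith [hx.1]
  rw [linInterp, if_neg hx1, dif_pos hcell, hfind]

lemma linInterp_eq_of_eq_lineMap (ht : ∀ j, 1 ≤ j → j < jn → t j < t (j + 1))
    (z : ℝ → ℝ) {J : ℕ} (hJ : 2 ≤ J) (hJn : J ≤ jn) {c x : ℝ} (hc : c ∈ Ioc 0 1)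
    (hx : x = t (J - 1) + c * (t J - t (J - 1))) :
    linInterp jn t z x = (1 - c) * z (t (J - 1)) + c * z (t J) := by
  have hlt : t (J - 1) < t J := by
    simpa [Nat.sub_add_cancel (by omega : 1 ≤ J)] using ht (J - 1) (by omega) (by omega)
  have hlen : t J - t (J - 1) ≠ 0 := sub_ne_zero.2 hlt.ne'
  have hx_mem : x ∈ Ioc (t (J - 1)) (t J) := by
    constructor <;> rw [hx] <;> nlinarith [hc.1, hc.2]
  rw [linInterp_eq_of_mem_Ioc ht z hJ hJn hx_mem, hx]
  field_simp
  ring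

lemma mem_Icc_of_eq_lineMap (ht : ∀ j, 1 ≤ j → j < jn → t j < t (j + 1))
    (h0 : 0 ≤ t 1) (h1 : t jn ≤ 1) {J : ℕ} (hJ : 2 ≤ J) (hJn : J ≤ jn) {c x : ℝ}
    (hc : c ∈ Icc 0 1) (hx : x = t (J - 1) + c * (t J - t (J - 1))) :
    t (J - 1) ∈ Icc 0 1 ∧ x ∈ Icc 0 1 := by
  have hmono := (strictMonoOn_Icc_of_lt_add_one ht).monotoneOn
  have hfirst : t 1 ≤ t (J - 1) := hmono ⟨le_rfl, by omega⟩ ⟨by omega, by omega⟩ (by omega)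
  have hcell_le : t (J - 1) ≤ t J := hmono ⟨by omega, by omega⟩ ⟨by omega, hJn⟩ (by omega)
  have hlast : t J ≤ t jn := hmono ⟨by omega, hJn⟩ ⟨by omega, le_rfl⟩ hJn
  refine ⟨⟨by linarith, by linarith⟩, ⟨?_, ?_⟩⟩ <;> rw [hx] <;> nlinarith [hc.1, hc.2]

end Grid

lemma tendsto_rpow_neg_of_tendsto_log_mul_atBot {ι : Type*} {l : Filter ι} {R e : ι → ℝ}
    (hR : ∀ᶠ i in l, 0 < R i) (h : Tendsto (fun i => Real.log (R i) * e i) l atBot) :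
    Tendsto (fun i => R i ^ (-e i)) l atTop :=
  (Real.tendsto_exp_atTop.comp (tendsto_neg_atBot_atTop.comp h)).congr' <|
    hR.mono fun i hi => by simp [Real.rpow_def_of_pos hi]

lemma inv_div_two_le_of_abs_mul_sub_one_le {q s : ℝ} (hq : 0 < q) (h : |q * s - 1| ≤ 1 / 2) :
    q⁻¹ / 2 ≤ s := by
  calc q⁻¹ / 2 = q⁻¹ * (1 / 2) := by ring
    _ ≤ q⁻¹ * (q * s) := by gcongr; linarith [(abs_le.1 h).1]
    _ = s := inv_mul_cancel_left₀ hq.ne' s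

lemma div_two_pow_le_rpow {R s g M : ℝ} (hR : 0 < R) (hs : R / 2 ≤ s) (hg : 0 < g) (hgM : g ≤ M) :
    R ^ g / 2 ^ M ≤ s ^ g :=
  calc R ^ g / 2 ^ M ≤ R ^ g / 2 ^ g := by gcongr; norm_num
    _ = (R / 2) ^ g := (Real.div_rpow hR.le zero_le_two g).symm
    _ ≤ s ^ g := by gcongr

lemma lt_sub_div_mul_of_lt {K M g x y : ℝ} (hK : 0 ≤ K) (hg : 0 < g) (hgM : g ≤ M) (hy : 0 < y)
    (h : (K * M + 1) * y < x) : K < (x - y) / (g * y) := by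
  rw [lt_div_iff₀ (by positivity)]
  nlinarith [mul_le_mul_of_nonneg_left hgM (mul_nonneg hK hy.le)]

lemma lt_standardized_interp_error {K M c R s g₀ g₁ g₂ : ℝ} (hK : 0 ≤ K) (hc : c ∈ Ico 0 1)
    (hR : 0 < R) (hs : R / 2 ≤ s) (hg₀ : 0 < g₀) (hg₀M : g₀ ≤ M) (hg₁ : 0 < g₁) (hg₁M : g₁ ≤ M)
    (hgrowth : (K * M + 1) * 2 ^ M / (1 - c) < R ^ (g₁ - g₀)) :
    K < ((1 - c) * s ^ g₁ + c * s ^ g₂ - R ^ g₀) / (g₀ * R ^ g₀) := by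
  have h1c : 0 < 1 - c := sub_pos.2 hc.2
  have hRg₀ : 0 < R ^ g₀ := Real.rpow_pos_of_pos hR g₀
  have hsplit : R ^ g₁ = R ^ (g₁ - g₀) * R ^ g₀ := by
    rw [← Real.rpow_add hR, sub_add_cancel]
  refine lt_sub_div_mul_of_lt hK hg₀ hg₀M hRg₀ ?_
  calc (K * M + 1) * R ^ g₀ = (K * M + 1) * 2 ^ M / (1 - c) * ((1 - c) / 2 ^ M) * R ^ g₀ := by
        field_simp
    _ < R ^ (g₁ - g₀) * ((1 - c) / 2 ^ M) * R ^ g₀ := by gcongr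
    _ = (1 - c) * (R ^ g₁ / 2 ^ M) := by rw [hsplit]; ring
    _ ≤ (1 - c) * s ^ g₁ := by gcongr; exact div_two_pow_le_rpow hR hs hg₁ hg₁M
    _ ≤ (1 - c) * s ^ g₁ + c * s ^ g₂ :=
        le_add_of_nonneg_right (mul_nonneg hc.1 (Real.rpow_nonneg (by linarith) _))

lemma tendsto_measure_one_of_compl_subset {Ω ι : Type*} [MeasurableSpace Ω] {P : Measure Ω}
    [IsProbabilityMeasure P] {l : Filter ι} {A B : ι → Set Ω}
    (hB : Tendsto (fun i => P (B i)) l (𝓝 0)) (hAB : ∀ᶠ i in l, (B i)ᶜ ⊆ A i) :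
    Tendsto (fun i => P (A i)) l (𝓝 1) := by
  have hlow : ∀ᶠ i in l, 1 - P (B i) ≤ P (A i) := hAB.mono fun i hi =>
    tsub_le_iff_right.2 <| calc
      1 = P univ := measure_univ.symm
      _ ≤ P (A i ∪ B i) := measure_mono fun ω _ => or_iff_not_imp_right.2 fun h => hi h
      _ ≤ P (A i) + P (B i) := measure_union_le _ _
  have hone : Tendsto (fun i => 1 - P (B i)) l (𝓝 1) := by
    simpa using ENNReal.Tendsto.sub tendsto_const_nhds hB (Or.inl ENNReal.one_ne_top)
  exact tendsto_of_tendsto_of_tendsto_of_le_of_le' hone tendsto_const_nhds hlow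
    (Eventually.of_forall fun i => prob_le_one)

theorem interpolated_location_estimator_inconsistent_general
    {Ω : Type*} [MeasurableSpace Ω] (P : Measure Ω) [IsProbabilityMeasure P]
    (γ : ℝ → ℝ) (hγcont : ContinuousOn γ (Icc 0 1))
    (hγpos : ∀ s ∈ Icc (0:ℝ) 1, 0 < γ s)
    (k : ℕ → ℕ) (hk : ∀ n, 1 ≤ n → 1 ≤ k n ∧ k n ≤ n)
    -- grid
    (jn : ℕ → ℕ) (t : ℕ → ℕ → ℝ)
    (htnonneg : ∀ n, 0 ≤ t n 1) (htle1 : ∀ n, t n (jn n) ≤ 1)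
    (htmono : ∀ n j, 1 ≤ j → j < jn n → t n j < t n (j + 1))
    -- W n = V_{n-kₙ:n}, the (n-kₙ)-th order statistic of V 1, …, V n
    (W : ℕ → Ω → ℝ)
    -- assumption: (kₙ/n) V_{n-kₙ:n} → 1 in probability
    (hWconv : ∀ ε > 0, Tendsto
      (fun n : ℕ => P {ω | ε < |(k n : ℝ) / n * W n ω - 1|}) atTop (𝓝 0))
    -- the interior points tₙ = t_{n,j(n)-1} + c(t_{n,j(n)} - t_{n,j(n)-1})
    (c : ℝ) (hc : c ∈ Ioo (0:ℝ) 1)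
    (j : ℕ → ℕ) (hj : ∀ n, 2 ≤ j n ∧ j n ≤ jn n)
    (tn : ℕ → ℝ) (htn : ∀ n, tn n = t n (j n - 1) + c * (t n (j n) - t n (j n - 1)))
    -- log(n/kₙ) (γ_{tₙ} - γ_{t_{n,j(n)-1}}) → -∞
    (hdiv : Tendsto (fun n : ℕ =>
      Real.log ((n : ℝ) / (k n : ℝ)) * (γ (tn n) - γ (t n (j n - 1)))) atTop atBot) :
    -- conclusion: the standardized estimation error at tₙ tends to +∞ in probability
    ∀ K > 0, Tendsto
      (fun n : ℕ => P {ω |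
        K < (linInterp (jn n) (t n) (fun u => W n ω ^ γ u) (tn n)
              - ((n : ℝ) / (k n : ℝ)) ^ γ (tn n))
            / (γ (tn n) * ((n : ℝ) / (k n : ℝ)) ^ γ (tn n))})
      atTop (𝓝 1) := by
  intro K hK
  obtain ⟨M, hM⟩ := isCompact_Icc.bddAbove_image hγcont
  have hγM : ∀ s ∈ Icc (0:ℝ) 1, γ s ≤ M := fun s hs => hM (mem_image_of_mem γ hs)
  have hq : ∀ᶠ n : ℕ in atTop, 0 < (k n : ℝ) / n := (eventually_ge_atTop 1).mono fun n hn =>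
    div_pos (by exact_mod_cast (hk n hn).1) (by exact_mod_cast hn)
  have hgrowth := (tendsto_rpow_neg_of_tendsto_log_mul_atBot
    (hq.mono fun n hn => by rw [← inv_div]; positivity) hdiv).eventually_gt_atTop
    ((K * M + 1) * 2 ^ M / (1 - c))
  refine tendsto_measure_one_of_compl_subset (hWconv (1 / 2) one_half_pos) ?_
  filter_upwards [hq, hgrowth] with n hqn hgn ω hω
  obtain ⟨ha, htn_mem⟩ := mem_Icc_of_eq_lineMap (htmono n) (htnonneg n) (htle1 n) (hj n).1
    (hj n).2 (Ioo_subset_Icc_self hc) (htn n)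
  have hW : (n : ℝ) / k n / 2 ≤ W n ω := by
    simpa only [inv_div] using inv_div_two_le_of_abs_mul_sub_one_le hqn (not_lt.1 hω)
  rw [neg_sub] at hgn
  rw [mem_ofPred_eq, linInterp_eq_of_eq_lineMap (htmono n) _ (hj n).1 (hj n).2
    (Ioo_subset_Ioc_self hc) (htn n)]
  exact lt_standardized_interp_error hK.le (Ioo_subset_Ico_self hc)
    (by rw [← inv_div]; positivity) hW (hγpos _ htn_mem) (hγM _ htn_mem) (hγpos _ ha) (hγM _ ha) hgn

/-- Example 1: in the Pareto model X_t = V^{γ_t}, if γ oscillates too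
much relative to 1/log(n/kₙ) between a grid point and an interior point tₙ, then the
standardized error of the interpolated location estimator at tₙ tends to +∞ in
probability; in particular the interpolated estimator is not uniformly consistent. -/
theorem interpolated_location_estimator_inconsistent
    {Ω : Type*} [MeasurableSpace Ω] (P : Measure Ω) [IsProbabilityMeasure P]
    (V : ℕ → Ω → ℝ)
    (hVmeas : ∀ i, Measurable (V i))
    (hVindep : iIndepFun V P)
    (hVsupp : ∀ i ω, 1 ≤ V i ω)
    (hVtail : ∀ i, ∀ x : ℝ, 1 ≤ x → (P {ω | x < V i ω}).toReal = x⁻¹)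
    (γ : ℝ → ℝ) (hγcont : ContinuousOn γ (Icc 0 1))
    (hγpos : ∀ s ∈ Icc (0:ℝ) 1, 0 < γ s)
    (k : ℕ → ℕ) (hk : ∀ n, 1 ≤ n → 1 ≤ k n ∧ k n ≤ n)
    (hkinfty : Tendsto (fun n : ℕ => (k n : ℝ)) atTop atTop)
    (hkn0 : Tendsto (fun n : ℕ => (k n : ℝ) / n) atTop (𝓝 0))
    -- grid
    (jn : ℕ → ℕ) (t : ℕ → ℕ → ℝ)
    (hjn : ∀ n, 2 ≤ jn n)
    (ht0 : ∀ n, t n 0 = 0) (htend : ∀ n, t n (jn n + 1) = 1)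
    (htnonneg : ∀ n, 0 ≤ t n 1) (htle1 : ∀ n, t n (jn n) ≤ 1)
    (htmono : ∀ n j, 1 ≤ j → j < jn n → t n j < t n (j + 1))
    -- W n = V_{n-kₙ:n}, the (n-kₙ)-th order statistic of V 1, …, V n
    (W : ℕ → Ω → ℝ)
    (hW : ∀ n ω, W n ω =
      sInf {x : ℝ | (n - k n : ℕ) ≤ ((Finset.Icc 1 n).filter (fun i => V i ω ≤ x)).card})
    -- assumption: (kₙ/n) V_{n-kₙ:n} → 1 in probability
    (hWconv : ∀ ε > 0, Tendsto
      (fun n : ℕ => P {ω | ε < |(k n : ℝ) / n * W n ω - 1|}) atTop (𝓝 0))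
    -- the interior points tₙ = t_{n,j(n)-1} + c(t_{n,j(n)} - t_{n,j(n)-1})
    (c : ℝ) (hc : c ∈ Ioo (0:ℝ) 1)
    (j : ℕ → ℕ) (hj : ∀ n, 2 ≤ j n ∧ j n ≤ jn n)
    (tn : ℕ → ℝ) (htn : ∀ n, tn n = t n (j n - 1) + c * (t n (j n) - t n (j n - 1)))
    -- log(n/kₙ) (γ_{tₙ} - γ_{t_{n,j(n)-1}}) → -∞
    (hdiv : Tendsto (fun n : ℕ =>
      Real.log ((n : ℝ) / (k n : ℝ)) * (γ (tn n) - γ (t n (j n - 1)))) atTop atBot) :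
    -- conclusion: the standardized estimation error at tₙ tends to +∞ in probability
    ∀ K > 0, Tendsto
      (fun n : ℕ => P {ω |
        K < (linInterp (jn n) (t n) (fun u => W n ω ^ γ u) (tn n)
              - ((n : ℝ) / (k n : ℝ)) ^ γ (tn n))
            / (γ (tn n) * ((n : ℝ) / (k n : ℝ)) ^ γ (tn n))})
      atTop (𝓝 1) :=
  interpolated_location_estimator_inconsistent_general P γ hγcont hγpos k hk jn t htnonneg htle1
    htmono W hWconv c hc j hj tn htn hdiv
end

section
/- Let γ > 0 and σ > 0, let Y be a standard Pareto random variable (P{Y > x} = x^{−1} for x ≥ 1) and let Z be a centered Gaussian random variable with variance σ², independent of Y. Then for every u > 0, P{Y^γ e^Z > u} = u^{−1/γ} exp(σ²/(2γ²)) Φ((log u)/σ − σ/γ) + 1 − Φ((log u)/σ), where Φ denotes the standard normal cumulative distribution function. -/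
/-!
Given `Z = z`, the event `u < Y ^ γ * exp z` is `exp ((log u - z) / γ) < Y`, which for a standard
Pareto `Y` has probability `min 1 (exp ((z - log u) / γ))`; by independence the tail is the
expectation of this quantity under `N(0, σ²)`. On `{z > log u}` the integrand is `1`, giving
`1 - Φ(log u / σ)`. On `{z ≤ log u}`, exponential tilting
`φ_{0,σ²}(z) e^{z/γ} = e^{σ²/(2γ²)} φ_{σ²/γ,σ²}(z)` turns the integral into a Gaussian
probability, giving the first term.
-/

open MeasureTheory ProbabilityTheory Set

/-- The standard normal cumulative distribution function Φ. -/
noncomputable def stdNormalCDF (x : ℝ) : ℝ :=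
  (gaussianReal 0 1 (Iic x)).toReal

open Real
open scoped NNReal ENNReal

lemma gaussianReal_Iic_toReal_eq_stdNormalCDF (m : ℝ) {σ : ℝ} (hσ : 0 < σ) (x : ℝ) :
    (gaussianReal m (σ ^ 2).toNNReal (Iic x)).toReal = stdNormalCDF ((x - m) / σ) := by
  have hstd :
      (gaussianReal 0 1).map (fun y => σ * y + m) = gaussianReal m (σ ^ 2).toNNReal := by
    change (gaussianReal 0 1).map ((· + m) ∘ (σ * ·)) = _
    rw [← Measure.map_map (by fun_prop) (by fun_prop), gaussianReal_map_const_mul,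
      gaussianReal_map_add_const]
    congr 1
    · ring
    · ext; simp [sq_nonneg]
  have hpre : (fun y => σ * y + m) ⁻¹' Iic x = Iic ((x - m) / σ) := by
    ext y
    simp only [mem_preimage, mem_Iic, le_div_iff₀ hσ]
    constructor <;> intro h <;> linarith
  rw [← hstd, Measure.map_apply (by fun_prop) measurableSet_Iic, hpre, stdNormalCDF]

lemma gaussianReal_Ioi_toReal_eq_one_sub_stdNormalCDF (m : ℝ) {σ : ℝ} (hσ : 0 < σ) (x : ℝ) :
    (gaussianReal m (σ ^ 2).toNNReal (Ioi x)).toReal = 1 - stdNormalCDF ((x - m) / σ) := by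
  rw [← compl_Iic, prob_compl_eq_one_sub measurableSet_Iic,
    ENNReal.toReal_sub_of_le prob_le_one ENNReal.one_ne_top, ENNReal.toReal_one,
    gaussianReal_Iic_toReal_eq_stdNormalCDF m hσ]

lemma gaussianPDFReal_mul_exp_mul (m : ℝ) (v : ℝ≥0) (t z : ℝ) :
    gaussianPDFReal m v z * exp (t * z)
      = exp (m * t + v * t ^ 2 / 2) * gaussianPDFReal (m + v * t) v z := by
  rcases eq_or_ne v 0 with rfl | hv
  · simp [gaussianPDFReal_zero_var]
  simp only [gaussianPDFReal]
  rw [mul_assoc, mul_left_comm (exp _), ← exp_add, ← exp_add]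
  congr 2
  field_simp
  ring

lemma withDensity_exp_mul_gaussianReal (m : ℝ) {v : ℝ≥0} (hv : v ≠ 0) (t : ℝ) :
    (gaussianReal m v).withDensity (fun z => ENNReal.ofReal (exp (t * z)))
      = ENNReal.ofReal (exp (m * t + v * t ^ 2 / 2)) • gaussianReal (m + v * t) v := by
  ext s hs
  rw [Measure.smul_apply, gaussianReal_of_var_ne_zero _ hv, gaussianReal_of_var_ne_zero _ hv,
    withDensity_apply _ hs, withDensity_apply _ hs, smul_eq_mul,
    setLIntegral_withDensity_eq_setLIntegral_mul _ (measurable_gaussianPDF _ _) (by fun_prop) hs,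
    ← lintegral_const_mul _ (measurable_gaussianPDF _ _)]
  refine lintegral_congr fun z => ?_
  simp only [Pi.mul_apply, gaussianPDF]
  rw [← ENNReal.ofReal_mul (gaussianPDFReal_nonneg _ _ _), gaussianPDFReal_mul_exp_mul,
    ENNReal.ofReal_mul (exp_nonneg _)]

lemma lintegral_min_one_exp_gaussianReal {σ : ℝ} (hσ : 0 < σ) {t : ℝ} (ht : 0 ≤ t) (x : ℝ) :
    (∫⁻ z, ENNReal.ofReal (min 1 (exp (t * (z - x)))) ∂gaussianReal 0 (σ ^ 2).toNNReal).toReal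
      = exp (σ ^ 2 * t ^ 2 / 2 - t * x) * stdNormalCDF (x / σ - σ * t)
        + (1 - stdNormalCDF (x / σ)) := by
  set v : ℝ≥0 := (σ ^ 2).toNNReal with hv
  have hv0 : v ≠ 0 := by simp [hv, hσ.ne']
  have hvσ : (v : ℝ) = σ ^ 2 := Real.coe_toNNReal _ (sq_nonneg σ)
  have hshift : (x - σ ^ 2 * t) / σ = x / σ - σ * t := by field_simp
  have below : ∫⁻ z in Iic x, ENNReal.ofReal (min 1 (exp (t * (z - x)))) ∂gaussianReal 0 v
      = ENNReal.ofReal (exp (-(t * x))) * ENNReal.ofReal (exp (v * t ^ 2 / 2))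
          * gaussianReal (v * t) v (Iic x) := by
    have hmin : ∀ z ∈ Iic x, ENNReal.ofReal (min 1 (exp (t * (z - x))))
        = ENNReal.ofReal (exp (-(t * x))) * ENNReal.ofReal (exp (t * z)) := by
      intro z (hz : z ≤ x)
      rw [min_eq_right (exp_le_one_iff.mpr (mul_nonpos_of_nonneg_of_nonpos ht (by linarith))),
        ← ENNReal.ofReal_mul (exp_nonneg _), ← exp_add]
      ring_nf
    rw [setLIntegral_congr_fun measurableSet_Iic hmin, lintegral_const_mul _ (by fun_prop),
      ← withDensity_apply _ measurableSet_Iic, withDensity_exp_mul_gaussianReal 0 hv0,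
      Measure.smul_apply, smul_eq_mul, zero_mul, zero_add, zero_add, mul_assoc]
  have above : ∫⁻ z in Ioi x, ENNReal.ofReal (min 1 (exp (t * (z - x)))) ∂gaussianReal 0 v
      = gaussianReal 0 v (Ioi x) := by
    rw [← setLIntegral_one]
    refine setLIntegral_congr_fun measurableSet_Ioi fun z (hz : x < z) => ?_
    rw [min_eq_left (one_le_exp (mul_nonneg ht (by linarith))), ENNReal.ofReal_one]
  rw [← lintegral_add_compl _ measurableSet_Iic, compl_Iic, below, above,
    ENNReal.toReal_add (by finiteness) (by finiteness), ENNReal.toReal_mul, ENNReal.toReal_mul,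
    ENNReal.toReal_ofReal (exp_nonneg _), ENNReal.toReal_ofReal (exp_nonneg _), ← exp_add,
    neg_add_eq_sub, gaussianReal_Iic_toReal_eq_stdNormalCDF _ hσ,
    gaussianReal_Ioi_toReal_eq_one_sub_stdNormalCDF _ hσ, hvσ, sub_zero, hshift]

lemma ProbabilityTheory.IndepFun.measure_preimage_prodMk_eq_lintegral {Ω α β : Type*}
    [MeasurableSpace Ω] [MeasurableSpace α] [MeasurableSpace β] {P : Measure Ω} [IsFiniteMeasure P]
    {X : Ω → α} {Y : Ω → β} (hXY : IndepFun X Y P) (hX : AEMeasurable X P)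
    (hY : AEMeasurable Y P) {s : Set (α × β)} (hs : MeasurableSet s) :
    P ((fun ω => (X ω, Y ω)) ⁻¹' s) = ∫⁻ x, P.map Y (Prod.mk x ⁻¹' s) ∂P.map X := by
  rw [← Measure.map_apply_of_aemeasurable (hX.prodMk hY) hs,
    hXY.map_prod_eq_prod_map_map hX hY, Measure.prod_apply hs]

lemma measure_lt_eq_ofReal_min_one_inv {Ω : Type*} [MeasurableSpace Ω] {P : Measure Ω}
    {Y : Ω → ℝ} (hYtail : ∀ x : ℝ, 1 ≤ x → (P {ω | x < Y ω}).toReal = x⁻¹)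
    (hYtail' : ∀ x : ℝ, x < 1 → P {ω | x < Y ω} = 1) {c : ℝ} (hc : 0 < c) :
    P {ω | c < Y ω} = ENNReal.ofReal (min 1 c⁻¹) := by
  rcases lt_or_ge c 1 with hc1 | hc1
  · rw [hYtail' c hc1, min_eq_left (one_le_inv₀ hc |>.mpr hc1.le), ENNReal.ofReal_one]
  · have hfin : P {ω | c < Y ω} ≠ ⊤ := fun htop => by
      simpa [htop, hc.ne] using hYtail c hc1
    rw [min_eq_right (inv_le_one_of_one_le₀ hc1), ← hYtail c hc1, ENNReal.ofReal_toReal hfin]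

lemma lt_rpow_mul_exp_iff {u y γ : ℝ} (hu : 0 < u) (hy : 0 < y) (hγ : 0 < γ) (z : ℝ) :
    u < y ^ γ * exp z ↔ exp ((log u - z) / γ) < y := by
  rw [rpow_def_of_pos hy, ← exp_add, ← log_lt_iff_lt_exp hu, ← lt_log_iff_exp_lt hy,
    div_lt_iff₀ hγ]
  constructor <;> intro h <;> linarith

/-- Example 2: the tail of X = Y^γ e^Z for a standard Pareto Y
independent of a centered Gaussian Z with variance σ². -/
theorem pareto_lognormal_tail
    {Ω : Type*} [MeasurableSpace Ω] (P : Measure Ω) [IsProbabilityMeasure P]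
    (γ σ : ℝ) (hγ : 0 < γ) (hσ : 0 < σ)
    (Y Z : Ω → ℝ) (hYmeas : Measurable Y) (hZmeas : Measurable Z)
    -- Y is standard Pareto
    (hYtail : ∀ x : ℝ, 1 ≤ x → (P {ω | x < Y ω}).toReal = x⁻¹)
    (hYtail' : ∀ x : ℝ, x < 1 → P {ω | x < Y ω} = 1)
    -- Z is centered Gaussian with variance σ²
    (hZlaw : Measure.map Z P = gaussianReal 0 (Real.toNNReal (σ ^ 2)))
    -- Y and Z are independent
    (hindep : IndepFun Y Z P) :
    ∀ u : ℝ, 0 < u →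
      (P {ω | u < Y ω ^ γ * Real.exp (Z ω)}).toReal
        = u ^ (-1 / γ) * Real.exp (σ ^ 2 / (2 * γ ^ 2))
            * stdNormalCDF (Real.log u / σ - σ / γ)
          + 1 - stdNormalCDF (Real.log u / σ) := by
  intro u hu
  set c : ℝ → ℝ := fun z => exp ((log u - z) / γ)
  have hYpos : ∀ᵐ ω ∂P, 0 < Y ω := by
    rw [ae_iff_measure_eq (measurableSet_lt measurable_const hYmeas).nullMeasurableSet,
      hYtail' 0 one_pos, measure_univ]
  have hevent : P {ω | u < Y ω ^ γ * exp (Z ω)}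
      = P ((fun ω => (Z ω, Y ω)) ⁻¹' {p | c p.1 < p.2}) :=
    measure_congr <| hYpos.mono fun ω hω => propext (lt_rpow_mul_exp_iff hu hω hγ (Z ω))
  have htail (z : ℝ) : P.map Y (Prod.mk z ⁻¹' {p | c p.1 < p.2})
      = ENNReal.ofReal (min 1 (exp (γ⁻¹ * (z - log u)))) := by
    rw [show Prod.mk z ⁻¹' {p | c p.1 < p.2} = Ioi (c z) from rfl,
      Measure.map_apply hYmeas measurableSet_Ioi]
    change P {ω | c z < Y ω} = _
    rw [measure_lt_eq_ofReal_min_one_inv hYtail hYtail' (exp_pos _), ← exp_neg]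
    ring_nf
  have hscale :
      exp (σ ^ 2 * γ⁻¹ ^ 2 / 2 - γ⁻¹ * log u) = u ^ (-1 / γ) * exp (σ ^ 2 / (2 * γ ^ 2)) := by
    rw [rpow_def_of_pos hu, ← exp_add]
    ring_nf
  rw [hevent, hindep.symm.measure_preimage_prodMk_eq_lintegral hZmeas.aemeasurable
      hYmeas.aemeasurable (measurableSet_lt (by fun_prop) measurable_snd),
    lintegral_congr htail, hZlaw, lintegral_min_one_exp_gaussianReal hσ (inv_nonneg.mpr hγ.le),
    hscale, div_eq_mul_inv σ γ]
  ring
end
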